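/- arXiv:2204.07357 — 5 statements merged into one kernel-verified Lean document; each statement's English description precedes it below -/
import Mathlib

section
/- Let b ≥ 2 be an integer, S a non-empty finite set of primes none of which divides b, and A a subset of [0,1). If A is not dense in [0,1] and T_b(A ∩ ℚ) ⊆ A, then A contains at most finitely many S-integers, i.e., A ∩ ℤ_S is a finite set. -/
/-!
Write an element of `A ∩ ℤ_S` as `a / q` in lowest terms and let `p ^ k` be the largest
prime-power factor of `q = p ^ k * m`, so that `q ≤ (p ^ k) ^ |S|`. With `n = ∏_{r ∈ S} r (r - 1)`,
the power `g = b ^ (n m)` is `≡ 1 mod m`, and by lifting the exponent `g - 1` has a `p`-adic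
valuation `t` depending only on `p`. The powers of `g` then exhaust the residues `≡ 1` modulo
`p ^ t * m` in `(ℤ / q)ˣ`, so the orbit of `a / q` under `T_b`, which stays in `A`, contains every
`N / q` with `N ≡ a [ZMOD p ^ t * m]`: a grid of mesh `p ^ t / p ^ k`, which tends to `0` as `q`
grows. Since `A` misses an interval of `[0, 1]`, the denominators `q` are bounded.
-/

/-- The map `T_b : x ↦ bx (mod 1)`, i.e. the fractional part of `bx`. -/
noncomputable def Tb (b : ℕ) (x : ℝ) : ℝ := Int.fract ((b : ℝ) * x)

theorem emultiplicity_pow_sub_one {p : ℕ} (hp : p.Prime) {x : ℤ} (hx : (p : ℤ) ^ 2 ∣ x - 1)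
    (n : ℕ) :
    emultiplicity (p : ℤ) (x ^ n - 1) =
      emultiplicity (p : ℤ) (x - 1) + emultiplicity (p : ℤ) n := by
  have hpx : (p : ℤ) ∣ x - 1 := (dvd_pow_self _ two_ne_zero).trans hx
  have hnx : ¬(p : ℤ) ∣ x := fun h ↦
    (Nat.prime_iff_prime_int.mp hp).not_dvd_one (by simpa using dvd_sub h hpx)
  rcases hp.eq_two_or_odd' with rfl | hodd
  · simpa using Int.two_pow_sub_pow' (y := 1) n (by simpa using hx) hnx
  · simpa [Int.natCast_emultiplicity] using
      Int.emultiplicity_pow_sub_pow hp hodd (y := 1) hpx hnx n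

theorem exists_eq_pow_mul_not_dvd_of_emultiplicity_eq {α : Type*} [CommMonoid α] {a b : α}
    {n : ℕ} (h : emultiplicity a b = n) : ∃ u, b = a ^ n * u ∧ ¬a ∣ u := by
  obtain ⟨⟨u, rfl⟩, hn⟩ := emultiplicity_eq_coe.mp h
  exact ⟨u, rfl, fun ⟨v, hv⟩ ↦ hn ⟨v, by rw [hv, pow_succ, mul_assoc]⟩⟩

theorem exists_dvd_add_natCast_mul {p : ℕ} (hp : p.Prime) {u : ℤ} (hu : ¬(p : ℤ) ∣ u) (δ : ℤ) :
    ∃ e : ℕ, (p : ℤ) ∣ δ + e * u := by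
  have := Fact.mk hp
  have hu' : (u : ZMod p) ≠ 0 := by rwa [Ne, ZMod.intCast_zmod_eq_zero_iff_dvd]
  refine ⟨((-δ : ZMod p) * (u : ZMod p)⁻¹).val, (ZMod.intCast_zmod_eq_zero_iff_dvd _ _).mp ?_⟩
  push_cast
  rw [ZMod.natCast_zmod_val, mul_assoc, inv_mul_cancel₀ hu']
  ring

theorem exists_pow_dvd_sub_of_emultiplicity {p : ℕ} (hp : p.Prime) {g : ℤ} {t : ℕ} (ht : 2 ≤ t)
    (hg : emultiplicity (p : ℤ) (g - 1) = t) (k : ℕ) {y : ℤ} (hy : (p : ℤ) ^ min t k ∣ y - 1) :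
    ∃ s : ℕ, (p : ℤ) ^ k ∣ g ^ s - y := by
  induction k with
  | zero => exact ⟨0, by simp⟩
  | succ k ih =>
    rcases lt_or_ge k t with hkt | htk
    · exact ⟨0, by simpa [min_eq_right (by omega : k + 1 ≤ t)] using dvd_sub_comm.mp hy⟩
    rw [min_eq_left (by omega)] at hy
    obtain ⟨s, δ, hδ⟩ := ih (by rwa [min_eq_left htk])
    have hpg : (p : ℤ) ^ 2 ∣ g - 1 :=
      (pow_dvd_pow _ ht).trans (pow_dvd_iff_le_emultiplicity.mpr hg.ge)
    -- `g ^ p ^ (k - t) = 1 + u * p ^ k` with `p ∤ u`; a suitable power of it corrects `g ^ s`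
    -- modulo `p ^ (k + 1)`.
    have hh : emultiplicity (p : ℤ) ((g ^ p ^ (k - t)) - 1) = k := by
      rw [emultiplicity_pow_sub_one hp hpg, hg, Nat.cast_pow,
        emultiplicity_pow_self_of_prime (Nat.prime_iff_prime_int.mp hp)]
      norm_cast
      omega
    obtain ⟨u, hu, hnu⟩ := exists_eq_pow_mul_not_dvd_of_emultiplicity_eq hh
    obtain ⟨e, f, hf⟩ := exists_dvd_add_natCast_mul hp hnu δ
    obtain ⟨w, hw⟩ := sq_dvd_add_pow_sub_sub ((p : ℤ) ^ k * u) 1 e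
    obtain ⟨z, hz⟩ := (dvd_pow_self (p : ℤ) (by omega : t ≠ 0)).trans hy
    obtain ⟨k, rfl⟩ : ∃ k', k = k' + 1 := ⟨k - 1, by omega⟩
    refine ⟨s + p ^ (k + 1 - t) * e,
      f + z * u * e + p ^ k * (δ * u * e + (y + p ^ (k + 1) * δ) * u ^ 2 * w), ?_⟩
    rw [pow_add, pow_mul, sub_eq_iff_eq_add.mp hu]
    linear_combination (g ^ s) * hw + (p : ℤ) ^ (k + 1) * hf + (p : ℤ) ^ (k + 1) * u * e * hz +
      (1 + (p : ℤ) ^ (k + 1) * u * e + ((p : ℤ) ^ (k + 1) * u) ^ 2 * w) * hδ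

theorem exists_pow_dvd_sub_of_dvd_sub_one {p : ℕ} (hp : p.Prime) {g m : ℤ} {t : ℕ} (ht : 2 ≤ t)
    (hg : emultiplicity (p : ℤ) (g - 1) = t) (hm : m ∣ g - 1) (hpm : IsCoprime (p : ℤ) m)
    (k : ℕ) {y : ℤ} (hy : (p : ℤ) ^ min t k * m ∣ y - 1) :
    ∃ s : ℕ, (p : ℤ) ^ k * m ∣ g ^ s - y := by
  obtain ⟨s, hs⟩ := exists_pow_dvd_sub_of_emultiplicity hp ht hg k (dvd_of_mul_right_dvd hy)
  refine ⟨s, (hpm.pow_left).mul_dvd hs ?_⟩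
  have hgs : m ∣ g ^ s - 1 := hm.trans (by simpa using sub_dvd_pow_sub_pow g 1 s)
  simpa using dvd_sub hgs (dvd_of_mul_left_dvd hy)

theorem exists_pow_mul_dvd_sub_of_forall_dvd_sub_one {q d g a : ℤ} (hdq : d ∣ q)
    (hg : ∀ y, d ∣ y - 1 → ∃ s : ℕ, q ∣ g ^ s - y) (ha : IsCoprime a q) {N : ℤ}
    (hN : d ∣ N - a) : ∃ s : ℕ, q ∣ g ^ s * a - N := by
  obtain ⟨u, v, huv⟩ := ha
  obtain ⟨s, hs⟩ := hg (u * N) <| by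
    have : u * N - 1 = u * (N - a) - v * q := by linear_combination huv
    rw [this]
    exact dvd_sub (hN.mul_left u) (hdq.mul_left v)
  refine ⟨s, ?_⟩
  have : g ^ s * a - N = a * (g ^ s - u * N) - N * v * q := by linear_combination N * huv
  rw [this]
  exact dvd_sub (hs.mul_left a) (dvd_mul_left q _)

theorem natCast_dvd_pow_sub_one {b n N : ℕ} (hb : b.Coprime n) (hN : n.totient ∣ N) :
    (n : ℤ) ∣ (b : ℤ) ^ N - 1 := by
  obtain ⟨c, rfl⟩ := hN
  have := (Nat.ModEq.pow_totient hb).pow c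
  rw [← pow_mul, one_pow] at this
  exact_mod_cast (Nat.modEq_iff_dvd.mp this.symm)

theorem totient_dvd_mul_prod_sub_one {m : ℕ} {S : Finset ℕ} (hm : m.primeFactors ⊆ S) :
    m.totient ∣ m * ∏ r ∈ S, (r - 1) :=
  (Dvd.intro _ (Nat.totient_mul_prod_primeFactors m)).trans
    (mul_dvd_mul_left m (Finset.prod_dvd_prod_of_subset _ _ _ hm))

theorem exists_mem_primeFactors_le_pow_card {q : ℕ} (hq : 1 < q) :
    ∃ p ∈ q.primeFactors, q ≤ (p ^ q.factorization p) ^ q.primeFactors.card := by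
  obtain ⟨p, hp, hmax⟩ := q.primeFactors.exists_max_image (fun r ↦ r ^ q.factorization r)
    (Nat.nonempty_primeFactors.mpr hq)
  refine ⟨p, hp, ?_⟩
  calc q = ∏ r ∈ q.primeFactors, r ^ q.factorization r :=
      (Nat.prod_factorization_pow_eq_self (by omega)).symm
    _ ≤ ∏ _r ∈ q.primeFactors, p ^ q.factorization p := Finset.prod_le_prod' hmax
    _ = _ := Finset.prod_const _

theorem exists_pow_pow_dvd_sub_of_sq_dvd {p : ℕ} (hp : p.Prime) {G : ℤ} (hG1 : G ≠ 1)
    (hG : (p : ℤ) ^ 2 ∣ G - 1) {m : ℕ} (hpm : ¬p ∣ m) (hm : (m : ℤ) ∣ G ^ m - 1) (k : ℕ) {y : ℤ}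
    (hy : (p : ℤ) ^ min (multiplicity (p : ℤ) (G - 1)) k * m ∣ y - 1) :
    ∃ s : ℕ, (p : ℤ) ^ k * m ∣ (G ^ m) ^ s - y := by
  set t := multiplicity (p : ℤ) (G - 1)
  have ht : emultiplicity (p : ℤ) (G - 1) = t :=
    (Int.finiteMultiplicity_iff.mpr ⟨by simpa using hp.ne_one, sub_ne_zero.mpr hG1⟩)
      |>.emultiplicity_eq_multiplicity
  have hGm : emultiplicity (p : ℤ) (G ^ m - 1) = t := by
    rw [emultiplicity_pow_sub_one hp hG, ht, emultiplicity_eq_zero.mpr (by exact_mod_cast hpm),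
      add_zero]
  have hpm' : IsCoprime (p : ℤ) m :=
    Int.isCoprime_iff_gcd_eq_one.mpr (by simpa using (hp.coprime_iff_not_dvd.mpr hpm))
  exact exists_pow_dvd_sub_of_dvd_sub_one hp
    (by exact_mod_cast (pow_dvd_iff_le_emultiplicity.mp hG).trans_eq ht) hGm hm hpm' k hy

theorem sq_dvd_pow_sub_one {b p n : ℕ} (hp : p.Prime) (hpb : ¬p ∣ b) (hn : p * (p - 1) ∣ n) :
    (p : ℤ) ^ 2 ∣ (b : ℤ) ^ n - 1 := by
  have hbp : b.Coprime (p ^ 2) := ((hp.coprime_iff_not_dvd.mpr hpb).pow_left 2).symm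
  have h := natCast_dvd_pow_sub_one (N := n) hbp <| by
    rwa [Nat.totient_prime_pow_succ hp, pow_one]
  exact_mod_cast h

theorem dvd_pow_mul_sub_one {b m n : ℕ} {S : Finset ℕ} (hS : ∀ p ∈ S, ¬p ∣ b) (hm0 : m ≠ 0)
    (hm : m.primeFactors ⊆ S) (hn : ∏ r ∈ S, (r - 1) ∣ n) : (m : ℤ) ∣ (b : ℤ) ^ (n * m) - 1 := by
  have hbm : b.Coprime m := Nat.coprime_of_dvd fun r hr hrb hrm ↦
    hS r (hm (Nat.mem_primeFactors.mpr ⟨hr, hrm, hm0⟩)) hrb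
  refine natCast_dvd_pow_sub_one hbm ((totient_dvd_mul_prod_sub_one hm).trans ?_)
  rw [mul_comm n]
  exact mul_dvd_mul_left m hn

theorem exists_pow_dvd_sub_of_mem_primeFactors {b q p : ℕ} (hb : 2 ≤ b) {S : Finset ℕ}
    (hS : ∀ p ∈ S, p.Prime ∧ ¬p ∣ b) (hqS : q.primeFactors ⊆ S) (hpq : p ∈ q.primeFactors)
    {y : ℤ} (hy : (p : ℤ) ^ min (multiplicity (p : ℤ) ((b : ℤ) ^ ∏ r ∈ S, r * (r - 1) - 1))
      (q.factorization p) * (ordCompl[p] q : ℕ) ∣ y - 1) :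
    ∃ s : ℕ, (q : ℤ) ∣ (b : ℤ) ^ s - y := by
  set n := ∏ r ∈ S, r * (r - 1)
  have hp := Nat.prime_of_mem_primeFactors hpq
  have hq0 : q ≠ 0 := (Nat.mem_primeFactors.mp hpq).2.2
  have hG1 : (b : ℤ) ^ n ≠ 1 := by
    have hn : n ≠ 0 := Finset.prod_ne_zero_iff.mpr fun r hr ↦
      have := (hS r hr).1.two_le; (Nat.mul_pos (by omega) (by omega)).ne'
    exact_mod_cast (Nat.one_lt_pow hn (by omega)).ne'
  have hGp := sq_dvd_pow_sub_one hp (hS p (hqS hpq)).2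
    (Finset.dvd_prod_of_mem (fun r ↦ r * (r - 1)) (hqS hpq))
  have hGm := dvd_pow_mul_sub_one (n := n) (fun r hr ↦ (hS r hr).2)
    (Nat.ordCompl_pos p hq0).ne' ((Nat.primeFactors_mono (Nat.ordCompl_dvd q p) hq0).trans hqS)
    (Finset.prod_dvd_prod_of_dvd _ _ fun r _ ↦ dvd_mul_left _ _)
  rw [pow_mul] at hGm
  obtain ⟨s, hs⟩ :=
    exists_pow_pow_dvd_sub_of_sq_dvd hp hG1 hGp (Nat.not_dvd_ordCompl hp hq0) hGm _ hy
  have hqkm : (p : ℤ) ^ q.factorization p * (ordCompl[p] q : ℕ) = q := by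
    exact_mod_cast Nat.ordProj_mul_ordCompl_eq_self q p
  rw [hqkm] at hs
  exact ⟨n * ordCompl[p] q * s, by rwa [pow_mul, pow_mul]⟩

-- The bound on `d` says `(d / q) ^ |S| ≤ M / q`, without division.
theorem exists_pow_mul_dvd_sub_of_primeFactors_subset {b : ℕ} (hb : 2 ≤ b) {S : Finset ℕ}
    (hS : ∀ p ∈ S, p.Prime ∧ ¬p ∣ b) :
    ∃ M : ℕ, ∀ q : ℕ, 1 < q → q.primeFactors ⊆ S → ∃ d : ℕ, 0 < d ∧
      d ^ S.card * q ≤ M * q ^ S.card ∧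
      ∀ a N : ℤ, IsCoprime a q → (d : ℤ) ∣ N - a → ∃ s : ℕ, (q : ℤ) ∣ (b : ℤ) ^ s * a - N := by
  set t := fun p : ℕ ↦ multiplicity (p : ℤ) ((b : ℤ) ^ ∏ r ∈ S, r * (r - 1) - 1)
  refine ⟨(S.sup fun p ↦ p ^ t p) ^ S.card, fun q hq hqS ↦ ?_⟩
  obtain ⟨p, hpq, hqp⟩ := exists_mem_primeFactors_le_pow_card hq
  have hp := Nat.prime_of_mem_primeFactors hpq
  set k := q.factorization p
  set m := ordCompl[p] q
  have hqkm : p ^ k * m = q := Nat.ordProj_mul_ordCompl_eq_self q p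
  refine ⟨p ^ min (t p) k * m, Nat.mul_pos (pow_pos hp.pos _) (Nat.ordCompl_pos p (by omega)),
    ?_, fun a N ha hN ↦ ?_⟩
  · have hpt : p ^ t p ≤ S.sup fun p ↦ p ^ t p := Finset.le_sup (f := fun p ↦ p ^ t p) (hqS hpq)
    have hqpS : q ≤ (p ^ k) ^ S.card :=
      hqp.trans (Nat.pow_le_pow_right (pow_pos hp.pos _) (Finset.card_le_card hqS))
    calc (p ^ min (t p) k * m) ^ S.card * q
        ≤ (p ^ t p * m) ^ S.card * (p ^ k) ^ S.card := by
          gcongr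
          · exact hp.one_le
          · exact min_le_left _ _
      _ = (p ^ t p) ^ S.card * q ^ S.card := by rw [← hqkm]; ring
      _ ≤ _ := by gcongr
  · have hdq : ((p ^ min (t p) k * m : ℕ) : ℤ) ∣ q := by
      rw [← hqkm]
      exact_mod_cast mul_dvd_mul_right (pow_dvd_pow p (min_le_right _ _)) m
    refine exists_pow_mul_dvd_sub_of_forall_dvd_sub_one hdq (fun y hy ↦ ?_) ha hN
    exact exists_pow_dvd_sub_of_mem_primeFactors hb hS hqS hpq (by exact_mod_cast hy)

theorem exists_dvd_sub_mem_Ico (x : ℝ) (a : ℤ) {d : ℕ} (hd : 0 < d) :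
    ∃ N : ℤ, (d : ℤ) ∣ N - a ∧ x ≤ N ∧ (N : ℝ) < x + d := by
  have hd' : (0 : ℤ) < d := by exact_mod_cast hd
  obtain ⟨h1, h2⟩ := toIcoMod_mem_Ico hd' ⌈x⌉ a
  refine ⟨toIcoMod hd' ⌈x⌉ a, ⟨-toIcoDiv hd' ⌈x⌉ a, ?_⟩, ?_, ?_⟩
  · rw [toIcoMod_sub_self, smul_eq_mul, mul_comm]
  · exact (Int.le_ceil x).trans (by exact_mod_cast h1)
  · have h2' : ((toIcoMod hd' ⌈x⌉ a : ℤ) : ℝ) + 1 ≤ ⌈x⌉ + d := by exact_mod_cast h2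
    linarith [Int.ceil_lt_add_one x]

theorem fract_pow_mul_ratCast_eq {b s : ℕ} {r : ℚ} {N : ℤ}
    (h : (r.den : ℤ) ∣ (b : ℤ) ^ s * r.num - N) (h0 : 0 ≤ N) (h1 : N < r.den) :
    Int.fract ((b : ℝ) ^ s * r) = N / r.den := by
  have : (b : ℝ) ^ s * r = (((b : ℤ) ^ s * r.num : ℤ) : ℝ) / (r.den : ℕ) := by
    rw [Rat.cast_def]; push_cast; ring
  rw [this, Int.fract_div_intCast_eq_div_intCast_mod, (Int.modEq_iff_dvd.mpr (dvd_sub_comm.mp h)),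
    Int.emod_eq_of_lt h0 h1]

theorem Tb_iterate_fract (b : ℕ) (x : ℝ) (j : ℕ) :
    (Tb b)^[j] (Int.fract x) = Int.fract ((b : ℝ) ^ j * x) := by
  induction j with
  | zero => simp
  | succ j ih =>
    rw [Function.iterate_succ_apply', ih, Tb, Int.fract_eq_fract]
    exact ⟨-(b * ⌊(b : ℝ) ^ j * x⌋), by rw [Int.fract]; push_cast; ring⟩

theorem mapsTo_Tb_inter_range_ratCast {b : ℕ} {A : Set ℝ}
    (hT : ∀ x ∈ A, (∃ q : ℚ, (q : ℝ) = x) → Tb b x ∈ A) :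
    Set.MapsTo (Tb b) (A ∩ Set.range ((↑) : ℚ → ℝ)) (A ∩ Set.range ((↑) : ℚ → ℝ)) := by
  rintro _ ⟨hx, r, rfl⟩
  exact ⟨hT _ hx ⟨r, rfl⟩, Int.fract ((b : ℚ) * r), by simp [Tb, Rat.cast_fract]⟩

theorem exists_Icc_disjoint_of_not_subset_closure {A : Set ℝ}
    (h : ¬Set.Icc (0 : ℝ) 1 ⊆ closure A) :
    ∃ c ε : ℝ, 0 < ε ∧ 0 ≤ c ∧ c + ε ≤ 1 ∧ Disjoint (Set.Icc c (c + ε)) A := by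
  obtain ⟨y, ⟨hy0, hy1⟩, hyA⟩ := Set.not_subset.mp h
  obtain ⟨δ, hδ, hball⟩ := Metric.mem_nhds_iff.mp (isClosed_closure.isOpen_compl.mem_nhds hyA)
  set η := min (δ / 2) 1
  have hη : 0 < η := lt_min (by linarith) one_pos
  have hηδ : η ≤ δ / 2 := min_le_left _ _
  have hη1 : η ≤ 1 := min_le_right _ _
  -- `Icc ((1 - η) * y) ((1 - η) * y + η)` contains `y` and lies within `[0, 1]`.
  refine ⟨(1 - η) * y, η, hη, by nlinarith, by nlinarith, Set.disjoint_left.mpr ?_⟩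
  rintro z ⟨hz1, hz2⟩ hzA
  refine hball ?_ (subset_closure hzA)
  rw [Metric.mem_ball, Real.dist_eq, abs_sub_lt_iff]
  constructor <;> nlinarith

theorem finite_setOf_rat_den_le (D : ℕ) : {r : ℚ | r.den ≤ D ∧ 0 ≤ r ∧ r < 1}.Finite := by
  refine Set.Finite.of_finite_image (f := fun r : ℚ ↦ (r.num, r.den)) ?_
    fun r _ s _ h ↦ Rat.ext (congrArg Prod.fst h) (congrArg Prod.snd h)
  refine ((Set.finite_Icc (0 : ℤ) D).prod (Set.finite_Iic D)).subset ?_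
  rintro _ ⟨r, ⟨hD, h0, h1⟩, rfl⟩
  exact ⟨⟨Rat.num_nonneg.mpr h0,
    (Rat.num_lt_denom_iff.mpr h1).le.trans (by exact_mod_cast hD)⟩, hD⟩

theorem exists_fract_pow_mul_mem_Icc {b : ℕ} (hb : 2 ≤ b) {S : Finset ℕ}
    (hS : ∀ p ∈ S, p.Prime ∧ ¬p ∣ b) {ε : ℝ} (hε : 0 < ε) :
    ∃ D : ℕ, ∀ r : ℚ, D < r.den → r.den.primeFactors ⊆ S → ∀ c : ℝ, 0 ≤ c → c + ε ≤ 1 →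
      ∃ s : ℕ, Int.fract ((b : ℝ) ^ s * r) ∈ Set.Icc c (c + ε) := by
  obtain ⟨M, hM⟩ := exists_pow_mul_dvd_sub_of_primeFactors_subset hb hS
  obtain ⟨D, hD⟩ := exists_nat_gt (M / ε ^ S.card)
  have hD0 : 0 < D := by exact_mod_cast (by positivity : (0 : ℝ) ≤ M / ε ^ S.card).trans_lt hD
  refine ⟨D, fun r hrD hrS c hc0 hc1 ↦ ?_⟩
  set q := r.den
  have hq : (0 : ℝ) < q := by exact_mod_cast r.pos
  obtain ⟨d, hd, hdq, hcov⟩ := hM q (by omega) hrS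
  have hdε : (d : ℝ) ≤ ε * q := by
    refine (lt_of_pow_lt_pow_left₀ S.card (by positivity) ?_).le
    have hMq : (M : ℝ) < ε ^ S.card * q := by
      rw [div_lt_iff₀ (by positivity)] at hD
      nlinarith [show (D : ℝ) < q by exact_mod_cast hrD, pow_pos hε S.card]
    have hdq' : (d : ℝ) ^ S.card * q ≤ M * q ^ S.card := by exact_mod_cast hdq
    have : (d : ℝ) ^ S.card * q < (ε * q) ^ S.card * q := by
      rw [mul_pow]; nlinarith [pow_pos hq S.card]
    exact lt_of_mul_lt_mul_right this hq.le
  obtain ⟨N, hNa, hN0, hN1⟩ := exists_dvd_sub_mem_Ico (c * q) r.num hd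
  have hNq : (N : ℝ) < q := by nlinarith
  obtain ⟨s, hs⟩ := hcov r.num N (Int.isCoprime_iff_gcd_eq_one.mpr r.reduced) hNa
  refine ⟨s, ?_⟩
  rw [fract_pow_mul_ratCast_eq hs (by exact_mod_cast (by positivity : 0 ≤ c * q).trans hN0)
    (by exact_mod_cast hNq), Set.mem_Icc, le_div_iff₀ hq, div_le_iff₀ hq]
  constructor <;> nlinarith

theorem stmt0_general (b : ℕ) (hb : 2 ≤ b) (S : Finset ℕ)
    (hSp : ∀ p ∈ S, Nat.Prime p ∧ ¬ p ∣ b)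
    (A : Set ℝ) (hA : A ⊆ Set.Ico 0 1)
    (hAnd : ¬ Set.Icc (0 : ℝ) 1 ⊆ closure A)
    (hT : ∀ x ∈ A, (∃ q : ℚ, (q : ℝ) = x) → Tb b x ∈ A) :
    {x ∈ A | ∃ q : ℚ, (q : ℝ) = x ∧ ∀ p : ℕ, p.Prime → p ∣ q.den → p ∈ S}.Finite := by
  obtain ⟨c, ε, hε, hc0, hc1, hdisj⟩ := exists_Icc_disjoint_of_not_subset_closure hAnd
  obtain ⟨D, hD⟩ := exists_fract_pow_mul_mem_Icc hb hSp hε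
  refine ((finite_setOf_rat_den_le D).image ((↑) : ℚ → ℝ)).subset ?_
  rintro _ ⟨hxA, r, rfl, hrS⟩
  obtain ⟨h0, h1⟩ := hA hxA
  refine ⟨r, ⟨not_lt.mp fun hrD ↦ ?_, by exact_mod_cast h0, by exact_mod_cast h1⟩, rfl⟩
  obtain ⟨s, hs⟩ := hD r hrD (fun p hp ↦ hrS p (Nat.prime_of_mem_primeFactors hp)
    (Nat.dvd_of_mem_primeFactors hp)) c hc0 hc1
  have hmem := (mapsTo_Tb_inter_range_ratCast hT).iterate s ⟨hxA, r, rfl⟩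
  rw [← Int.fract_eq_self.mpr ⟨h0, h1⟩, Tb_iterate_fract] at hmem
  exact Set.disjoint_left.mp hdisj hs hmem.1

theorem stmt0 (b : ℕ) (hb : 2 ≤ b) (S : Finset ℕ) (hS : S.Nonempty)
    (hSp : ∀ p ∈ S, Nat.Prime p ∧ ¬ p ∣ b)
    (A : Set ℝ) (hA : A ⊆ Set.Ico 0 1)
    (hAnd : ¬ Set.Icc (0 : ℝ) 1 ⊆ closure A)
    (hT : ∀ x ∈ A, (∃ q : ℚ, (q : ℝ) = x) → Tb b x ∈ A) :
    {x ∈ A | ∃ q : ℚ, (q : ℝ) = x ∧ ∀ p : ℕ, p.Prime → p ∣ q.den → p ∈ S}.Finite :=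
  stmt0_general b hb S hSp A hA hAnd hT
end

section
/- Let b ≥ 2 be an integer, d_0 ≥ 1 and d_1 ≥ 1 integers, and a/d_1 ∈ [0,1) a rational number with gcd(a, d_1) = 1 and gcd(b, d_1) = 1. If (1/d_0)·T_b^{i_1}(a/d_1) + j_1/d_0 = (1/d_0)·T_b^{i_2}(a/d_1) + j_2/d_0 for some integers 0 ≤ i_1, i_2 ≤ ord(b,d_1) − 1 and 0 ≤ j_1, j_2 ≤ d_0 − 1, then i_1 = i_2 and j_1 = j_2. Consequently, the set {(1/d_0)·T_b^i(a/d_1) + j/d_0 : 0 ≤ i ≤ ord(b,d_1) − 1, 0 ≤ j ≤ d_0 − 1} has exactly d_0 · ord(b,d_1) elements. -/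
/-- `ordb b L` is the multiplicative order of `b` modulo `L`. -/
noncomputable def ordb (b L : ℕ) : ℕ := orderOf (b : ZMod L)

lemma Tb_iterate_natCast_div {b d m : ℕ} (hm : m < d) (i : ℕ) :
    (Tb b)^[i] ((m : ℝ) / d) = ((b ^ i * m % d : ℕ) : ℝ) / d := by
  induction i with
  | zero => simp [Nat.mod_eq_of_lt hm]
  | succ i ih =>
    rw [Function.iterate_succ_apply', ih, Tb, ← mul_div_assoc, ← Nat.cast_mul,
      Int.fract_div_natCast_eq_div_natCast_mod, Nat.mul_mod_mod, pow_succ', mul_assoc]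

lemma pow_mul_mod_injOn {b d a : ℕ} (ha : a.Coprime d) :
    Set.InjOn (fun i ↦ b ^ i * a % d) (Set.Iio (ordb b d)) := by
  intro i₁ hi₁ i₂ hi₂ h
  have hz : (b : ZMod d) ^ i₁ * a = (b : ZMod d) ^ i₂ * a := by
    exact_mod_cast (ZMod.natCast_eq_natCast_iff' _ _ d).mpr h
  exact pow_injOn_Iio_orderOf hi₁ hi₂ ((ZMod.unitOfCoprime a ha).isUnit.mul_left_injective hz)

lemma eq_and_eq_of_add_mul_eq {d m₁ m₂ j₁ j₂ : ℕ} (h₁ : m₁ < d) (h₂ : m₂ < d)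
    (h : m₁ + j₁ * d = m₂ + j₂ * d) : m₁ = m₂ ∧ j₁ = j₂ := by
  have hd : 0 < d := by omega
  have hm := congrArg (· % d) h
  have hj := congrArg (· / d) h
  simp only [Nat.add_mul_mod_self_right, Nat.mod_eq_of_lt h₁, Nat.mod_eq_of_lt h₂] at hm
  simp only [Nat.add_mul_div_right _ _ hd, Nat.div_eq_of_lt h₁, Nat.div_eq_of_lt h₂, zero_add] at hj
  exact ⟨hm, hj⟩

lemma ordb_pos {b d : ℕ} [NeZero d] (hbd : b.Coprime d) : 0 < ordb b d := by
  rw [ordb, ← ZMod.coe_unitOfCoprime b hbd, orderOf_units]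
  exact orderOf_pos _

noncomputable def shiftedOrbitPoint (b d₀ d₁ a : ℕ) (p : ℕ × ℕ) : ℝ :=
  1 / (d₀ : ℝ) * (Tb b)^[p.1] ((a : ℝ) / d₁) + (p.2 : ℝ) / d₀

lemma shiftedOrbitPoint_eq {b d₀ d₁ a : ℕ} (ha : a < d₁) (p : ℕ × ℕ) :
    shiftedOrbitPoint b d₀ d₁ a p = ((b ^ p.1 * a % d₁ + p.2 * d₁ : ℕ) : ℝ) / (d₀ * d₁) := by
  have hd₁ : (d₁ : ℝ) ≠ 0 := Nat.cast_ne_zero.mpr (by omega)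
  rw [shiftedOrbitPoint, Tb_iterate_natCast_div ha]
  push_cast
  field_simp

lemma shiftedOrbitPoint_injOn {b d₀ d₁ a : ℕ} (ha : a < d₁) (had : a.Coprime d₁) :
    Set.InjOn (shiftedOrbitPoint b d₀ d₁ a) (Set.Iio (ordb b d₁) ×ˢ Set.Iio d₀) := by
  rintro ⟨i₁, j₁⟩ ⟨hi₁, hj₁⟩ ⟨i₂, j₂⟩ ⟨hi₂, hj₂⟩ h
  have hd₀ : (d₀ : ℝ) ≠ 0 := Nat.cast_ne_zero.mpr (by simp at hj₁; omega)
  have hd₁ : (d₁ : ℝ) ≠ 0 := Nat.cast_ne_zero.mpr (by omega)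
  rw [shiftedOrbitPoint_eq ha, shiftedOrbitPoint_eq ha, div_left_inj' (mul_ne_zero hd₀ hd₁),
    Nat.cast_inj] at h
  obtain ⟨hm, hj⟩ := eq_and_eq_of_add_mul_eq (Nat.mod_lt _ (by omega)) (Nat.mod_lt _ (by omega)) h
  exact Prod.ext (pow_mul_mod_injOn had hi₁ hi₂ hm) hj

theorem stmt9_general (b : ℕ) (d0 d1 : ℕ) (hd0 : 1 ≤ d0)
    (a : ℕ) (had : Nat.Coprime a d1) (hbd : Nat.Coprime b d1) (h01 : a < d1) :
    (∀ i₁ i₂ j₁ j₂ : ℕ, i₁ ≤ ordb b d1 - 1 → i₂ ≤ ordb b d1 - 1 →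
        j₁ ≤ d0 - 1 → j₂ ≤ d0 - 1 →
        (1 / (d0 : ℝ)) * (Tb b)^[i₁] ((a : ℝ) / d1) + (j₁ : ℝ) / d0 =
          (1 / (d0 : ℝ)) * (Tb b)^[i₂] ((a : ℝ) / d1) + (j₂ : ℝ) / d0 →
        i₁ = i₂ ∧ j₁ = j₂) ∧
      {x : ℝ | ∃ i < ordb b d1, ∃ j < d0,
          x = (1 / (d0 : ℝ)) * (Tb b)^[i] ((a : ℝ) / d1) + (j : ℝ) / d0}.ncard =
        d0 * ordb b d1 := by
  have : NeZero d1 := ⟨(a.zero_le.trans_lt h01).ne'⟩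
  have hord := ordb_pos (b := b) hbd
  have hinj := shiftedOrbitPoint_injOn (b := b) (d₀ := d0) h01 had
  refine ⟨fun i₁ i₂ j₁ j₂ hi₁ hi₂ hj₁ hj₂ h ↦ ?_, ?_⟩
  · exact Prod.ext_iff.mp <| hinj (x₁ := (i₁, j₁)) (x₂ := (i₂, j₂))
      ⟨(by omega : i₁ < _), (by omega : j₁ < _)⟩ ⟨(by omega : i₂ < _), (by omega : j₂ < _)⟩ h
  · have hset : {x : ℝ | ∃ i < ordb b d1, ∃ j < d0,
          x = (1 / (d0 : ℝ)) * (Tb b)^[i] ((a : ℝ) / d1) + (j : ℝ) / d0} =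
        shiftedOrbitPoint b d0 d1 a '' (Set.Iio (ordb b d1) ×ˢ Set.Iio d0) := by
      ext x
      simp [shiftedOrbitPoint, eq_comm, and_assoc]
    rw [hset, hinj.ncard_image, Set.ncard_prod]
    simp [mul_comm]

theorem stmt9 (b : ℕ) (hb : 2 ≤ b) (d0 d1 : ℕ) (hd0 : 1 ≤ d0) (hd1 : 1 ≤ d1)
    (a : ℕ) (had : Nat.Coprime a d1) (hbd : Nat.Coprime b d1) (h01 : a < d1) :
    (∀ i₁ i₂ j₁ j₂ : ℕ, i₁ ≤ ordb b d1 - 1 → i₂ ≤ ordb b d1 - 1 →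
        j₁ ≤ d0 - 1 → j₂ ≤ d0 - 1 →
        (1 / (d0 : ℝ)) * (Tb b)^[i₁] ((a : ℝ) / d1) + (j₁ : ℝ) / d0 =
          (1 / (d0 : ℝ)) * (Tb b)^[i₂] ((a : ℝ) / d1) + (j₂ : ℝ) / d0 →
        i₁ = i₂ ∧ j₁ = j₂) ∧
      {x : ℝ | ∃ i < ordb b d1, ∃ j < d0,
          x = (1 / (d0 : ℝ)) * (Tb b)^[i] ((a : ℝ) / d1) + (j : ℝ) / d0}.ncard =
        d0 * ordb b d1 :=
  stmt9_general b d0 d1 hd0 a had hbd h01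
end

section
/- There exists an absolute constant c > 0 such that for every integer b ≥ 2, every non-empty finite set S of primes none of which divides b with largest element P, and every p ∈ S, one has N_p ≤ c · (log b / log p) · (p + P). -/
/-- The quantity `n_p` associated to `b` and a prime `p` not dividing `b`. -/
def np (b p : ℕ) : ℕ :=
  if p = 2 then max 3 (max (padicValNat 2 (b - 1)) (padicValNat 2 (b + 1)))
  else max 1 (padicValNat p (b ^ (p - 1) - 1))

/-- The quantity `N_p` associated to `b`, a finite set of primes `S`, and `p ∈ S`. -/
noncomputable def Np (b : ℕ) (S : Finset ℕ) (p : ℕ) : ℕ :=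
  S.sup (fun q => np b p - padicValNat p (ordb b (p ^ np b p))
    + padicValNat p (ordb b (q ^ np b q)))

/-- padic valuation times log p is at most log m. -/
lemma aux_val_log {p m : ℕ} (hp : 1 < p) (hm : m ≠ 0) :
    (padicValNat p m : ℝ) * Real.log p ≤ Real.log m := by
  have hdvd : p ^ padicValNat p m ∣ m := pow_padicValNat_dvd
  have hle : p ^ padicValNat p m ≤ m := Nat.le_of_dvd (Nat.pos_of_ne_zero hm) hdvd
  have hcast : ((p : ℝ)) ^ padicValNat p m ≤ (m : ℝ) := by exact_mod_cast hle
  have hpos : (0 : ℝ) < (p : ℝ) ^ padicValNat p m :=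
    pow_pos (by exact_mod_cast Nat.lt_of_lt_of_le Nat.zero_lt_one hp.le) _
  calc (padicValNat p m : ℝ) * Real.log p = Real.log ((p : ℝ) ^ padicValNat p m) := by
        rw [Real.log_pow]
    _ ≤ Real.log m := Real.log_le_log hpos hcast

/-- Bound on `np b p`. -/
lemma aux_np_le {b p : ℕ} (hb : 2 ≤ b) (hp : p.Prime) :
    (np b p : ℝ) * Real.log p ≤ 3 * Real.log p + 2 * p * Real.log b := by
  have hb0 : (0 : ℝ) < b := by positivity
  have hlb : (0 : ℝ) ≤ Real.log b := Real.log_nonneg (by exact_mod_cast hb.trans' one_le_two)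
  have hlp : (0 : ℝ) ≤ Real.log p := Real.log_nonneg (by exact_mod_cast hp.one_lt.le)
  unfold np
  by_cases h2 : p = 2
  · subst h2
    set v1 := padicValNat 2 (b - 1) with hv1
    set v2 := padicValNat 2 (b + 1) with hv2
    have hb1 : b - 1 ≠ 0 := by omega
    have e1 : (v1 : ℝ) * Real.log 2 ≤ Real.log b := by
      refine (aux_val_log one_lt_two hb1).trans ?_
      exact Real.log_le_log (by exact_mod_cast (by omega : 0 < b - 1))
        (by exact_mod_cast (by omega : b - 1 ≤ b))
    have e2 : (v2 : ℝ) * Real.log 2 ≤ 2 * Real.log b := by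
      refine (aux_val_log one_lt_two (by omega)).trans ?_
      have hb2 : (2 : ℝ) ≤ (b : ℝ) := by exact_mod_cast hb
      have : (b : ℝ) + 1 ≤ (b : ℝ) ^ 2 := by nlinarith [sq_nonneg ((b:ℝ) - 1), hb2]
      calc Real.log (↑(b + 1)) ≤ Real.log ((b : ℝ) ^ 2) := by
            push_cast
            exact Real.log_le_log (by positivity) this
        _ = 2 * Real.log b := by rw [Real.log_pow]; norm_num
    have hmax : ((max 3 (max v1 v2) : ℕ) : ℝ) ≤ 3 + (v1 : ℝ) + (v2 : ℝ) := by
      have : max 3 (max v1 v2) ≤ 3 + v1 + v2 := by omega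
      exact_mod_cast this
    simp only [if_pos rfl]
    have hl2 : (0 : ℝ) ≤ Real.log 2 := Real.log_nonneg one_le_two
    push_cast
    push_cast at hmax
    nlinarith [e1, e2, hmax, hl2]
  · simp only [if_neg h2]
    set v := padicValNat p (b ^ (p - 1) - 1) with hv
    have hp1 : 1 ≤ p - 1 := by have := hp.two_le; omega
    have hbp : 2 ≤ b ^ (p - 1) := le_trans hb (Nat.le_self_pow (by omega) b)
    have hne : b ^ (p - 1) - 1 ≠ 0 := by omega
    have ev : (v : ℝ) * Real.log p ≤ (p : ℝ) * Real.log b := by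
      refine (aux_val_log hp.one_lt hne).trans ?_
      calc Real.log (↑(b ^ (p - 1) - 1)) ≤ Real.log ((b : ℝ) ^ (p - 1)) := by
            refine Real.log_le_log (by exact_mod_cast (by omega : 0 < b ^ (p-1) - 1)) ?_
            exact_mod_cast (by omega : b ^ (p - 1) - 1 ≤ b ^ (p - 1))
        _ = ((p : ℝ) - 1) * Real.log b := by
            rw [Real.log_pow]
            congr 1
            have := hp.two_le
            push_cast [Nat.cast_sub (by omega : 1 ≤ p)]
            ring
        _ ≤ (p : ℝ) * Real.log b := by nlinarith [hlb]
    have hmax : ((max 1 v : ℕ) : ℝ) ≤ 1 + (v : ℝ) := by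
      have : max 1 v ≤ 1 + v := by omega
      exact_mod_cast this
    have hlp1 : (1 : ℝ) ≤ Real.log p + 1 := by linarith
    push_cast at hmax ⊢
    nlinarith [ev, hmax, hlp, hlb]

/-- The order of `b` mod `q^n` is positive and at most `q^n`. -/
lemma aux_ord_le {b q : ℕ} (n : ℕ) (hq : q.Prime) (hqb : ¬ q ∣ b) :
    0 < ordb b (q ^ n) ∧ ordb b (q ^ n) ≤ q ^ n := by
  haveI : NeZero (q ^ n) := ⟨pow_ne_zero n hq.pos.ne'⟩
  have hcop : Nat.Coprime b (q ^ n) :=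
    Nat.Coprime.pow_right n ((hq.coprime_iff_not_dvd.mpr hqb).symm)
  have hu : IsUnit ((b : ℕ) : ZMod (q ^ n)) := (ZMod.isUnit_iff_coprime b (q ^ n)).mpr hcop
  have hpow : ((b : ℕ) : ZMod (q ^ n)) ^ Nat.totient (q ^ n) = 1 := by
    have := ZMod.pow_totient hu.unit
    calc ((b : ℕ) : ZMod (q ^ n)) ^ Nat.totient (q ^ n)
        = ((hu.unit ^ Nat.totient (q ^ n) : (ZMod (q ^ n))ˣ) : ZMod (q ^ n)) := by
          rw [Units.val_pow_eq_pow_val, IsUnit.unit_spec]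
      _ = 1 := by rw [this, Units.val_one]
  have hdvd : ordb b (q ^ n) ∣ Nat.totient (q ^ n) := orderOf_dvd_of_pow_eq_one hpow
  have htpos : 0 < Nat.totient (q ^ n) := Nat.totient_pos.mpr (pow_pos hq.pos n)
  constructor
  · rcases Nat.eq_zero_or_pos (ordb b (q ^ n)) with h | h
    · rw [h] at hdvd; omega
    · exact h
  · exact (Nat.le_of_dvd htpos hdvd).trans (Nat.totient_le _)

theorem stmt12 : ∃ c : ℝ, c > 0 ∧
    ∀ (b : ℕ) (S : Finset ℕ), 2 ≤ b → S.Nonempty →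
      (∀ p ∈ S, Nat.Prime p ∧ ¬ p ∣ b) →
      ∀ P : ℕ, P ∈ S → (∀ q ∈ S, q ≤ P) →
      ∀ p ∈ S,
        (Np b S p : ℝ) ≤ c * (Real.log b / Real.log p) * ((p : ℝ) + (P : ℝ)) := by
  refine ⟨8, by norm_num, ?_⟩
  intro b S hb hS hprimes P hPS hPmax p hpS
  obtain ⟨hp, hpb⟩ := hprimes p hpS
  have hlp : (0 : ℝ) < Real.log p := Real.log_pos (by exact_mod_cast hp.one_lt)
  have hlb : (0 : ℝ) < Real.log b := Real.log_pos (by exact_mod_cast hb.trans_lt' one_lt_two)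
  have hl2 : (1 : ℝ) / 2 < Real.log 2 := by
    have := Real.log_two_gt_d9; linarith
  have hl2b : (1 : ℝ) / 2 < Real.log b := by
    refine hl2.trans_le (Real.log_le_log two_pos (by exact_mod_cast hb))
  -- key bound for each q in S
  have key : ∀ q ∈ S,
      ((np b p - padicValNat p (ordb b (p ^ np b p))
        + padicValNat p (ordb b (q ^ np b q)) : ℕ) : ℝ) * Real.log p
        ≤ 8 * Real.log b * ((p : ℝ) + (P : ℝ)) := by
    intro q hqS
    obtain ⟨hq, hqb⟩ := hprimes q hqS
    have hqP : q ≤ P := hPmax q hqS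
    have hlq : (0 : ℝ) ≤ Real.log q := Real.log_nonneg (by exact_mod_cast hq.one_lt.le)
    -- bound on the valuation term
    obtain ⟨hordpos, hordle⟩ := aux_ord_le (b := b) (np b q) hq hqb
    set v := padicValNat p (ordb b (q ^ np b q)) with hv
    have hv1 : (v : ℝ) * Real.log p ≤ (np b q : ℝ) * Real.log q := by
      refine (aux_val_log hp.one_lt hordpos.ne').trans ?_
      calc Real.log (ordb b (q ^ np b q)) ≤ Real.log ((q : ℝ) ^ np b q) := by
            refine Real.log_le_log (by exact_mod_cast hordpos) ?_
            exact_mod_cast hordle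
        _ = (np b q : ℝ) * Real.log q := Real.log_pow _ _
    have hnq : (np b q : ℝ) * Real.log q ≤ 3 * Real.log q + 2 * q * Real.log b :=
      aux_np_le hb hq
    -- log q ≤ q ≤ 2 q log b
    have hlogq : Real.log q ≤ (q : ℝ) := by
      have := Real.log_le_sub_one_of_pos (x := (q : ℝ)) (by exact_mod_cast hq.pos)
      linarith
    have hq2 : (q : ℝ) ≤ 2 * (q : ℝ) * Real.log b := by
      have hq0 : (0 : ℝ) ≤ q := by positivity
      nlinarith [hl2b]
    have hv2 : (v : ℝ) * Real.log p ≤ 8 * (q : ℝ) * Real.log b := by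
      nlinarith [hv1, hnq, hlogq, hq2, hlb.le, hlq]
    -- bound on the np term
    have hnp : (np b p : ℝ) * Real.log p ≤ 8 * (p : ℝ) * Real.log b := by
      have h1 := aux_np_le hb hp
      have hlogp : Real.log p ≤ (p : ℝ) := by
        have := Real.log_le_sub_one_of_pos (x := (p : ℝ)) (by exact_mod_cast hp.pos)
        linarith
      have hp2 : (p : ℝ) ≤ 2 * (p : ℝ) * Real.log b := by
        have hp0 : (0 : ℝ) ≤ p := by positivity
        nlinarith [hl2b]
      nlinarith [hlb.le]
    -- combine
    have hsub : (np b p - padicValNat p (ordb b (p ^ np b p)) + v : ℕ)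
        ≤ np b p + v := by omega
    have hcast : ((np b p - padicValNat p (ordb b (p ^ np b p)) + v : ℕ) : ℝ)
        ≤ (np b p : ℝ) + (v : ℝ) := by exact_mod_cast hsub
    have hPq : (q : ℝ) ≤ (P : ℝ) := by exact_mod_cast hqP
    have : ((np b p - padicValNat p (ordb b (p ^ np b p)) + v : ℕ) : ℝ) * Real.log p
        ≤ ((np b p : ℝ) + (v : ℝ)) * Real.log p := by
      exact mul_le_mul_of_nonneg_right hcast hlp.le
    refine this.trans ?_
    have : ((np b p : ℝ) + (v : ℝ)) * Real.log p
        = (np b p : ℝ) * Real.log p + (v : ℝ) * Real.log p := by ring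
    rw [this]
    nlinarith [hnp, hv2, hPq, hlb.le]
  -- reduce the sup to a single term
  obtain ⟨q0, hq0S, hsup⟩ := Finset.exists_mem_eq_sup S hS
    (fun q => np b p - padicValNat p (ordb b (p ^ np b p))
      + padicValNat p (ordb b (q ^ np b q)))
  have hkey := key q0 hq0S
  have hNp : (Np b S p : ℝ) * Real.log p ≤ 8 * Real.log b * ((p : ℝ) + (P : ℝ)) := by
    unfold Np
    rw [hsup]
    exact hkey
  calc (Np b S p : ℝ) = (Np b S p : ℝ) * Real.log p / Real.log p := by
        field_simp
    _ ≤ 8 * Real.log b * ((p : ℝ) + (P : ℝ)) / Real.log p := by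
        gcongr
    _ = 8 * (Real.log b / Real.log p) * ((p : ℝ) + (P : ℝ)) := by ring
end

section
/- Let b ≥ 2 be an integer, S a non-empty finite set of primes none of which divides b, and a'/d' ∈ [0,1) a rational number with gcd(a', d') = 1. Then for any ε > 0, there exists a positive number D such that for any a/d ∈ ℤ_S ∩ [0,1) with gcd(aa', dd') = 1 and d > D, the orbit {T_b^i(aa'/(dd')) : i ≥ 0} is ε-dense in [0,1]. -/
/-!
Write `A / N = a a' / (d d')` and pick `Q = b ^ L` with `1 / Q ≤ ε`. If the orbit of `A / N`
stayed `ε`-far from `x`, it would avoid the base-`Q` cell `[j / Q, (j + 1) / Q)` containing `x`.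
The orbit is invariant under `T_Q = T_b^[L]`, so each of its points `r / N` has no digit `j` in
base `Q`, and since `r ↦ ⌊r Q^k / N⌋` is injective once `N ≤ Q^k`, there are at most `(Q - 1)^k`
such points. But the orbit has at least `ord_d(b)` points, and lifting the exponent gives
`d ∣ C · ord_d(b)` with `C` depending on `b` and `S` only. Taking `Q^k ≈ N` yields
`d ≤ C (Q - 1)^k`, impossible for large `d` since `((Q - 1) / Q)^k → 0`.
-/

open Finset Filter Topology

section LiftingTheExponent

variable {p : ℕ} [hp : Fact p.Prime]

lemma padicValNat_le_of_dvd {a c : ℕ} (hc : c ≠ 0) (h : a ∣ c) :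
    padicValNat p a ≤ padicValNat p c :=
  (padicValNat_dvd_iff_le hc).1 (pow_padicValNat_dvd.trans h)

/-- The exponent `2 * (p - 1)` serves both cases: for `p = 2` it is the even exponent that the
`2`-adic lifting-the-exponent lemma needs, for odd `p` it makes `p ∣ b ^ (2 * (p - 1)) - 1`. -/
lemma padicValNat_pow_sub_one_le {b : ℕ} (hb : 1 < b) (hpb : ¬p ∣ b) {n : ℕ} (hn : n ≠ 0) :
    padicValNat p (b ^ n - 1) ≤ padicValNat p (b ^ (2 * (p - 1)) - 1) + padicValNat p n := by
  rcases hp.out.eq_two_or_odd' with rfl | hodd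
  · have hdvd : b ^ n - 1 ∣ b ^ (2 * n) - 1 := by
      simpa only [one_pow, pow_mul'] using Nat.sub_dvd_pow_sub_pow (b ^ n) 1 2
    have hle := padicValNat_le_of_dvd (p := 2)
      (by have := Nat.one_lt_pow (by omega : 2 * n ≠ 0) hb; omega) hdvd
    have h2n := padicValNat.pow_two_sub_one hb hpb (by omega : 2 * n ≠ 0) (even_two_mul n)
    have h2 := padicValNat.pow_two_sub_one hb hpb two_ne_zero even_two
    rw [padicValNat.mul two_ne_zero hn, padicValNat_self] at h2n
    norm_num at h2 ⊢
    omega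
  · set y := b ^ (2 * (p - 1))
    have hp2 := hp.out.two_le
    have hy : 1 < y := Nat.one_lt_pow (by omega) hb
    have hpy : p ∣ y - 1 := by
      have hfermat : p ∣ b ^ (p - 1) - 1 := Nat.dvd_of_mod_eq_zero
        (Nat.pow_card_sub_one_sub_one_mod_card hp.out ((hp.out.coprime_iff_not_dvd.2 hpb).symm))
      exact hfermat.trans <| by
        simpa only [one_pow, y, pow_mul'] using Nat.sub_dvd_pow_sub_pow (b ^ (p - 1)) 1 2
    have hdvd : b ^ n - 1 ∣ y ^ n - 1 := by
      simpa only [one_pow, y, ← pow_mul, mul_comm n] using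
        Nat.sub_dvd_pow_sub_pow (b ^ n) 1 (2 * (p - 1))
    have hlte := padicValNat.pow_sub_pow hodd hy hpy (fun h => hpb (hp.out.dvd_of_dvd_pow h)) hn
    rw [one_pow] at hlte
    rw [← hlte]
    exact padicValNat_le_of_dvd (by have := Nat.one_lt_pow hn hy; omega) hdvd

end LiftingTheExponent

lemma prod_pow_sub_one_ne_zero {b : ℕ} (hb : 1 < b) {S : Finset ℕ} (hS : ∀ p ∈ S, p.Prime) :
    ∏ p ∈ S, (b ^ (2 * (p - 1)) - 1) ≠ 0 :=
  prod_ne_zero_iff.2 fun p hp => Nat.sub_ne_zero_of_lt <|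
    Nat.one_lt_pow (by have := (hS p hp).two_le; omega) hb

lemma dvd_prod_mul_of_dvd_pow_sub_one {b : ℕ} (hb : 1 < b) {S : Finset ℕ}
    (hS : ∀ p ∈ S, p.Prime ∧ ¬p ∣ b) {d n : ℕ} (hdS : ∀ p, p.Prime → p ∣ d → p ∈ S)
    (hn : n ≠ 0) (hd : d ∣ b ^ n - 1) :
    d ∣ (∏ p ∈ S, (b ^ (2 * (p - 1)) - 1)) * n := by
  have hbn : b ^ n - 1 ≠ 0 := by have := Nat.one_lt_pow hn hb; omega
  have hC := prod_pow_sub_one_ne_zero hb fun p hp => (hS p hp).1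
  have hCn : (∏ p ∈ S, (b ^ (2 * (p - 1)) - 1)) * n ≠ 0 := mul_ne_zero hC hn
  refine (Nat.factorization_prime_le_iff_dvd (ne_zero_of_dvd_ne_zero hbn hd) hCn).1 fun p hp => ?_
  have := Fact.mk hp
  by_cases hpS : p ∈ S
  · rw [Nat.factorization_def _ hp, Nat.factorization_def _ hp, padicValNat.mul hC hn]
    calc padicValNat p d ≤ padicValNat p (b ^ n - 1) := padicValNat_le_of_dvd hbn hd
      _ ≤ padicValNat p (b ^ (2 * (p - 1)) - 1) + padicValNat p n :=
        padicValNat_pow_sub_one_le hb (hS p hpS).2 hn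
      _ ≤ _ := Nat.add_le_add_right (padicValNat_le_of_dvd hC (dvd_prod_of_mem _ hpS)) _
  · rw [Nat.factorization_eq_zero_of_not_dvd fun h => hpS (hdS p hp h)]
    exact Nat.zero_le _

lemma le_prod_mul_orderOf {b : ℕ} (hb : 1 < b) {S : Finset ℕ} (hS : ∀ p ∈ S, p.Prime ∧ ¬p ∣ b)
    {d : ℕ} (hd : 0 < d) (hdS : ∀ p, p.Prime → p ∣ d → p ∈ S) :
    d ≤ (∏ p ∈ S, (b ^ (2 * (p - 1)) - 1)) * orderOf (b : ZMod d) := by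
  have : NeZero d := ⟨hd.ne'⟩
  have hbd : b.Coprime d := Nat.coprime_of_dvd fun p hp hpb hpd => (hS p (hdS p hp hpd)).2 hpb
  have ht : orderOf (b : ZMod d) ≠ 0 :=
    (orderOf_pos_iff.2 ((ZMod.isUnit_iff_coprime b d).2 hbd).isOfFinOrder).ne'
  have hdvd : d ∣ b ^ orderOf (b : ZMod d) - 1 := by
    rw [← Nat.modEq_iff_dvd' (Nat.one_le_pow _ _ (by omega)), ← ZMod.natCast_eq_natCast_iff]
    push_cast
    exact (pow_orderOf_eq_one _).symm
  refine Nat.le_of_dvd (Nat.pos_of_ne_zero ?_) (dvd_prod_mul_of_dvd_pow_sub_one hb hS hdS ht hdvd)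
  exact mul_ne_zero (prod_pow_sub_one_ne_zero hb fun p hp => (hS p hp).1) ht

def avoidingDigit (Q j k : ℕ) : Finset ℕ :=
  (range (Q ^ k)).filter fun c => ∀ m < k, c / Q ^ m % Q ≠ j

lemma card_avoidingDigit_le {Q j : ℕ} (hj : j < Q) (k : ℕ) :
    #(avoidingDigit Q j k) ≤ (Q - 1) ^ k := by
  induction k with
  | zero => simp [avoidingDigit]
  | succ k ih =>
    have hsub : avoidingDigit Q j (k + 1) ⊆
        (avoidingDigit Q j k ×ˢ (range Q).erase j).image fun e => Q * e.1 + e.2 := by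
      intro c hc
      simp only [avoidingDigit, mem_filter, mem_range] at hc
      refine mem_image.2 ⟨(c / Q, c % Q), mem_product.2 ⟨?_, ?_⟩, Nat.div_add_mod c Q⟩
      · refine mem_filter.2 ⟨mem_range.2 ?_, fun m hm => ?_⟩
        · rw [Nat.div_lt_iff_lt_mul (by omega), ← pow_succ]
          exact hc.1
        · rw [Nat.div_div_eq_div_mul, ← pow_succ']
          exact hc.2 (m + 1) (by omega)
      · exact mem_erase.2
          ⟨by simpa using hc.2 0 (by omega), mem_range.2 (Nat.mod_lt _ (by omega))⟩
    calc #(avoidingDigit Q j (k + 1)) ≤ #(avoidingDigit Q j k) * #((range Q).erase j) :=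
          (card_le_card hsub).trans (card_image_le.trans (card_product _ _).le)
      _ ≤ (Q - 1) ^ k * (Q - 1) := by
          rw [card_erase_of_mem (mem_range.2 hj), card_range]
          exact Nat.mul_le_mul_right _ ih
      _ = (Q - 1) ^ (k + 1) := (pow_succ _ _).symm

/-- Both sides are the `(g + 1)`-st base-`Q` digit of `r / N`; the right one reads it as the first
digit of `T_Q^[g] (r / N)`. -/
lemma mul_pow_succ_div_mod {N : ℕ} (hN : 0 < N) (r Q g : ℕ) :
    r * Q ^ (g + 1) / N % Q = Q * (r * Q ^ g % N) / N := by
  rcases Nat.eq_zero_or_pos Q with rfl | hQ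
  · simp
  have hlt : Q * (r * Q ^ g % N) / N < Q := by
    rw [Nat.div_lt_iff_lt_mul hN]
    exact Nat.mul_lt_mul_of_pos_left (Nat.mod_lt _ hN) hQ
  have hsplit : r * Q ^ (g + 1) = N * (r * Q ^ g / N * Q) + Q * (r * Q ^ g % N) := by
    conv_lhs => rw [pow_succ, ← mul_assoc, ← Nat.div_add_mod (r * Q ^ g) N]
    ring
  rw [hsplit, Nat.mul_add_div hN, Nat.mul_add_mod_of_lt hlt]

lemma strictMono_mul_div {M N : ℕ} (hN : 0 < N) (hNM : N ≤ M) :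
    StrictMono fun r => r * M / N := by
  intro r s hrs
  calc r * M / N < r * M / N + 1 := Nat.lt_succ_self _
    _ = (r * M + N) / N := (Nat.add_div_right _ hN).symm
    _ ≤ s * M / N := Nat.div_le_div_right (by nlinarith)

lemma card_le_of_forall_mod_ne {Q N j k : ℕ} (hj : j < Q) (hN : 0 < N) (hNk : N ≤ Q ^ k)
    {R : Finset ℕ} (hR : ∀ r ∈ R, r < N ∧ ∀ g, Q * (r * Q ^ g % N) / N ≠ j) :
    #R ≤ (Q - 1) ^ k := by
  have hQ : 0 < Q := by omega
  refine le_trans (card_le_card_of_injOn (fun r => r * Q ^ k / N) (fun r hr => ?_)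
    ((strictMono_mul_div hN hNk).injective.injOn)) (card_avoidingDigit_le hj k)
  obtain ⟨hrN, hr⟩ := hR r hr
  refine mem_filter.2 ⟨mem_range.2 ?_, fun m hm => ?_⟩
  · exact Nat.div_lt_of_lt_mul (Nat.mul_lt_mul_of_pos_right hrN (pow_pos hQ k))
  · obtain ⟨g, rfl⟩ := Nat.exists_eq_add_of_lt hm
    rw [Nat.div_div_eq_div_mul, show m + g + 1 = g + 1 + m by omega, pow_add, ← mul_assoc,
      Nat.mul_div_mul_right _ _ (pow_pos hQ m), mul_pow_succ_div_mod hN]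
    exact hr g

lemma card_image_mul_pow_mod {b A d N : ℕ} (hdN : d ∣ N) (hAd : A.Coprime d) :
    #((range (orderOf (b : ZMod d))).image fun i => A * b ^ i % N) = orderOf (b : ZMod d) := by
  rw [card_image_of_injOn, card_range]
  intro i hi i' hi' h
  have hmod : ((A * b ^ i : ℕ) : ZMod d) = ((A * b ^ i' : ℕ) : ZMod d) :=
    (ZMod.natCast_eq_natCast_iff _ _ _).2 (Nat.ModEq.of_dvd hdN h)
  push_cast at hmod
  exact pow_injOn_Iio_orderOf (by simpa using hi) (by simpa using hi')
    (((ZMod.isUnit_iff_coprime A d).2 hAd).mul_left_cancel hmod)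

lemma orderOf_le_of_forall_mod_ne {b A d N L j k : ℕ} (hN : 0 < N) (hdN : d ∣ N)
    (hAd : A.Coprime d) (hj : j < b ^ L) (hNk : N ≤ (b ^ L) ^ k)
    (h : ∀ i, b ^ L * (A * b ^ i % N) / N ≠ j) :
    orderOf (b : ZMod d) ≤ (b ^ L - 1) ^ k := by
  rw [← card_image_mul_pow_mod hdN hAd]
  refine card_le_of_forall_mod_ne hj hN hNk fun r hr => ?_
  obtain ⟨i, -, rfl⟩ := mem_image.1 hr
  refine ⟨Nat.mod_lt _ hN, fun g => ?_⟩
  rw [Nat.mod_mul_mod, mul_assoc, ← pow_mul, ← pow_add]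
  exact h _

lemma Tb_iterate_natCast_div_s14 (b : ℕ) {A N : ℕ} (hAN : A < N) (n : ℕ) :
    (Tb b)^[n] (A / N) = ((A * b ^ n % N : ℕ) : ℝ) / N := by
  induction n with
  | zero => simp [Nat.mod_eq_of_lt hAN]
  | succ n ih =>
    have hcast :
        (b : ℝ) * (((A * b ^ n % N : ℕ) : ℝ) / N) = ((A * b ^ n % N * b : ℕ) : ℝ) / N := by
      push_cast
      ring
    rw [Function.iterate_succ_apply', ih, Tb, hcast, Int.fract_div_natCast_eq_div_natCast_mod,
      Nat.mod_mul_mod, mul_assoc, ← pow_succ]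

lemma exists_lt_forall_floor_eq_abs_sub_le {Q : ℕ} (hQ : 0 < Q) {x : ℝ}
    (hx : x ∈ Set.Icc 0 1) :
    ∃ j < Q, ∀ y : ℝ, 0 ≤ y → ⌊Q * y⌋₊ = j → |x - y| ≤ 1 / Q := by
  set j := min ⌊Q * x⌋₊ (Q - 1)
  have hQx : 0 ≤ (Q : ℝ) * x := mul_nonneg (Nat.cast_nonneg Q) hx.1
  have hjx : (j : ℝ) ≤ Q * x := (Nat.cast_le.2 (min_le_left _ _)).trans (Nat.floor_le hQx)
  have hxj : Q * x ≤ j + 1 := by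
    rcases min_cases ⌊Q * x⌋₊ (Q - 1) with ⟨h, -⟩ | ⟨h, -⟩ <;> rw [show j = _ from h]
    · exact (Nat.lt_floor_add_one _).le
    · rw [Nat.cast_sub hQ, Nat.cast_one, sub_add_cancel]
      nlinarith [hx.2]
  refine ⟨j, by omega, fun y hy hyj => ?_⟩
  have hjy : (j : ℝ) ≤ Q * y := hyj ▸ Nat.floor_le (by positivity)
  have hyj' : Q * y < j + 1 := hyj ▸ Nat.lt_floor_add_one _
  rw [abs_sub_le_iff, le_div_iff₀ (by positivity), le_div_iff₀ (by positivity)]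
  constructor <;> linarith

lemma exists_abs_sub_iterate_le {b A d N L k : ℕ} (hb : 0 < b) (hAN : A < N) (hdN : d ∣ N)
    (hAd : A.Coprime d) (hNk : N ≤ (b ^ L) ^ k) (hk : (b ^ L - 1) ^ k < orderOf (b : ZMod d))
    {x : ℝ} (hx : x ∈ Set.Icc 0 1) :
    ∃ i, |x - (Tb b)^[i] (A / N)| ≤ 1 / (b ^ L : ℕ) := by
  obtain ⟨j, hj, hcell⟩ := exists_lt_forall_floor_eq_abs_sub_le (pow_pos hb L) hx
  by_contra! hfar
  refine (orderOf_le_of_forall_mod_ne (by omega) hdN hAd hj hNk fun i hi => ?_).not_gt hk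
  refine (hfar i).not_ge (hcell _ ?_ ?_)
  · rw [Tb_iterate_natCast_div_s14 b hAN]
    positivity
  · rw [Tb_iterate_natCast_div_s14 b hAN, ← hi, ← Nat.floor_div_eq_div (K := ℝ)]
    push_cast
    ring_nf

lemma exists_forall_mul_pow_lt (K : ℕ) {Q : ℕ} (hQ : 0 < Q) :
    ∃ k₀, ∀ k ≥ k₀, K * (Q - 1) ^ k < Q ^ k := by
  have hQ' : (0 : ℝ) < Q := by exact_mod_cast hQ
  have hlim : Tendsto (fun k => (((Q - 1 : ℕ) : ℝ) / Q) ^ k) atTop (𝓝 0) :=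
    tendsto_pow_atTop_nhds_zero_of_lt_one (by positivity)
      ((div_lt_one hQ').2 (by exact_mod_cast Nat.sub_lt hQ one_pos))
  obtain ⟨k₀, hk₀⟩ := eventually_atTop.1
    (hlim.eventually (gt_mem_nhds (by positivity : (0 : ℝ) < 1 / (K + 1))))
  refine ⟨k₀, fun k hk => ?_⟩
  have h := hk₀ k hk
  rw [div_pow, div_lt_div_iff₀ (by positivity) (by positivity), one_mul] at h
  have h' : ((K * (Q - 1) ^ k : ℕ) : ℝ) < (Q ^ k : ℕ) := by
    push_cast
    nlinarith [pow_nonneg (Nat.cast_nonneg (α := ℝ) (Q - 1)) k]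
  exact_mod_cast h'

lemma exists_one_lt_pow_one_div_le {b : ℕ} (hb : 1 < b) {ε : ℝ} (hε : 0 < ε) :
    ∃ L, 1 < b ^ L ∧ 1 / ((b ^ L : ℕ) : ℝ) ≤ ε := by
  obtain ⟨L, hL⟩ := pow_unbounded_of_one_lt ε⁻¹ (by exact_mod_cast hb : (1 : ℝ) < b)
  refine ⟨L + 1, Nat.one_lt_pow L.succ_ne_zero hb, ?_⟩
  rw [one_div]
  refine inv_le_of_inv_le₀ hε (hL.le.trans ?_)
  push_cast
  exact pow_le_pow_right₀ (by exact_mod_cast hb.le) L.le_succ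

lemma pow_clog_le_mul {Q N : ℕ} (hQ : 1 < Q) (hN : 1 < N) : Q ^ Nat.clog Q N ≤ Q * N := by
  rw [← Nat.succ_pred_eq_of_pos (Nat.clog_pos hQ hN), pow_succ']
  exact Nat.mul_le_mul_left Q (Nat.pow_pred_clog_lt_self hQ hN).le

theorem stmt14_general (b : ℕ) (hb : 2 ≤ b) (S : Finset ℕ)
    (hSp : ∀ p ∈ S, Nat.Prime p ∧ ¬ p ∣ b)
    (a' d' : ℕ) (h01' : a' < d')
    (ε : ℝ) (hε : 0 < ε) :
    ∃ D : ℝ, D > 0 ∧ ∀ a d : ℕ, Nat.Coprime a d → a < d →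
      (∀ p : ℕ, p.Prime → p ∣ d → p ∈ S) →
      Nat.Coprime (a * a') (d * d') → (d : ℝ) > D →
      ∀ x ∈ Set.Icc (0 : ℝ) 1, ∃ i : ℕ,
        |x - (Tb b)^[i] (((a * a' : ℕ) : ℝ) / ((d * d' : ℕ) : ℝ))| ≤ ε := by
  obtain ⟨L, hQ, hQε⟩ := exists_one_lt_pow_one_div_le hb hε
  set Q := b ^ L
  set C := ∏ p ∈ S, (b ^ (2 * (p - 1)) - 1)
  obtain ⟨k₀, hk₀⟩ := exists_forall_mul_pow_lt (C * d' * Q) (by omega : 0 < Q)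
  refine ⟨Q ^ k₀, by positivity, fun a d _ had hdS hcop hdD x hx => ?_⟩
  have hd : Q ^ k₀ < d * d' :=
    (show Q ^ k₀ < d by exact_mod_cast hdD).trans_le (Nat.le_mul_of_pos_right d (by omega))
  set k := Nat.clog Q (d * d')
  have hk₀k : k₀ < k := (Nat.lt_clog_iff_pow_lt hQ).2 hd
  have hkN : Q ^ k ≤ Q * (d * d') :=
    pow_clog_le_mul hQ ((Nat.one_le_pow _ _ (by omega)).trans_lt hd)
  have ht : (Q - 1) ^ k < orderOf (b : ZMod d) := by
    by_contra! ht
    have hdC := (le_prod_mul_orderOf hb hSp (by omega) hdS).trans (Nat.mul_le_mul_left C ht)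
    have := hk₀ k hk₀k.le
    nlinarith [Nat.mul_le_mul_left (d' * Q) hdC]
  obtain ⟨i, hi⟩ := exists_abs_sub_iterate_le (by omega) (Nat.mul_lt_mul'' had h01')
    (dvd_mul_right d d') (Nat.Coprime.coprime_dvd_right (dvd_mul_right d d') hcop)
    (Nat.le_pow_clog hQ _) ht hx
  exact ⟨i, hi.trans hQε⟩

theorem stmt14 (b : ℕ) (hb : 2 ≤ b) (S : Finset ℕ) (hS : S.Nonempty)
    (hSp : ∀ p ∈ S, Nat.Prime p ∧ ¬ p ∣ b)
    (a' d' : ℕ) (ha'd' : Nat.Coprime a' d') (h01' : a' < d')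
    (ε : ℝ) (hε : 0 < ε) :
    ∃ D : ℝ, D > 0 ∧ ∀ a d : ℕ, Nat.Coprime a d → a < d →
      (∀ p : ℕ, p.Prime → p ∣ d → p ∈ S) →
      Nat.Coprime (a * a') (d * d') → (d : ℝ) > D →
      ∀ x ∈ Set.Icc (0 : ℝ) 1, ∃ i : ℕ,
        |x - (Tb b)^[i] (((a * a' : ℕ) : ℝ) / ((d * d' : ℕ) : ℝ))| ≤ ε :=
  stmt14_general b hb S hSp a' d' h01' ε hε
end

section
/- There exists an absolute constant c > 0 with the following property. Let b ≥ 2 be an integer and A ⊆ [0,1) a set satisfying T_b(A ∩ ℚ) ⊆ A which is not dense in [0,1], and let ε = sup{dist(x, A) : x ∈ [0,1)}. Then for any rational number a/d ∈ A with d ≥ 2 and gcd(ab, d) = 1, one has log(2εd) ≤ c · (P(d)² / log P(d)) · log b. -/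
/-- `Pd d` is the largest prime divisor of `d`. -/
def Pd (d : ℕ) : ℕ := d.primeFactors.sup id

/-!
The orbit of `a / d` under `T_b` consists of the points `(a b^k mod d) / d`. Put
`F = 2 ∏_{p ∣ d} (p - 1)` and `m = gcd(d, b^F - 1)`. Since `b^F ≡ 1` modulo every `p ∣ d`,
and modulo `4` if `d` is even, lifting the exponent gives
`v_p(b^{Fk} - 1) = v_p(b^F - 1) + v_p(k)`, so `b^F` has order exactly `d / m` modulo `d`.
There are only `d / m` residues `≡ 1 (mod m)`, so they are all powers of `b^F`; hence `A`
contains every `r / d` with `r ≡ a (mod m)`, and `ε ≤ m / d`. Lifting the exponent from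
`b^{2(p-1)}` instead bounds the `p`-part of `m` by `(b^{2(p-1)} - 1) F`, so
`2m ≤ b^{2 + 3 Σ_{p ∣ d} p}`, and `Σ_{p ≤ P} p · log P ≤ (1 + log 4) P²` because
`∏_{p ≤ P} p ≤ 4^P`.
-/

-- With truncated subtraction `LTEBase p 0` holds, hence the hypotheses `1 < x` below.
def LTEBase (p x : ℕ) : Prop := p ∣ x - 1 ∧ (p = 2 → 4 ∣ x - 1)

lemma LTEBase.pow {p x : ℕ} (h : LTEBase p x) (n : ℕ) : LTEBase p (x ^ n) :=
  ⟨h.1.trans (Nat.sub_one_dvd_pow_sub_one x n),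
    fun hp => (h.2 hp).trans (Nat.sub_one_dvd_pow_sub_one x n)⟩

lemma LTEBase.not_dvd {p x : ℕ} (hp : p.Prime) (hx : 1 < x) (h : LTEBase p x) : ¬ p ∣ x := by
  intro hpx
  have : p ∣ x - (x - 1) := Nat.dvd_sub hpx h.1
  rw [Nat.sub_sub_self hx.le] at this
  exact hp.one_lt.ne' (Nat.dvd_one.1 this)

theorem padicValNat_pow_sub_one {p x n : ℕ} (hp : p.Prime) (hx : 1 < x) (h : LTEBase p x)
    (hn : n ≠ 0) :
    padicValNat p (x ^ n - 1) = padicValNat p (x - 1) + padicValNat p n := by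
  have : Fact p.Prime := ⟨hp⟩
  rcases hp.eq_two_or_odd' with rfl | hodd
  · have hxn : 1 ≤ x ^ n := Nat.one_le_pow _ _ (by omega)
    have h4 : (4 : ℤ) ∣ ((x - 1 : ℕ) : ℤ) := Int.natCast_dvd_natCast.2 (h.2 rfl)
    have hx2 : ¬ (2 : ℤ) ∣ x := by exact_mod_cast h.not_dvd hp hx
    have key : emultiplicity ((2 : ℕ) : ℤ) ((x ^ n - 1 : ℕ) : ℤ) =
        emultiplicity ((2 : ℕ) : ℤ) ((x - 1 : ℕ) : ℤ) + emultiplicity ((2 : ℕ) : ℤ) (n : ℤ) := by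
      push_cast [Nat.cast_sub hxn, Nat.cast_sub hx.le] at h4 ⊢
      simpa using Int.two_pow_sub_pow' n h4 hx2
    simp only [Int.natCast_emultiplicity] at key
    have hxn1 : x ^ n - 1 ≠ 0 := by have := Nat.one_lt_pow hn hx; omega
    rw [← Nat.cast_inj (R := ℕ∞), Nat.cast_add, padicValNat_eq_emultiplicity hxn1,
      padicValNat_eq_emultiplicity (by omega), padicValNat_eq_emultiplicity hn, key]
  · simpa using padicValNat.pow_sub_pow hodd hx (by simpa using h.1) (h.not_dvd hp hx) hn

lemma pow_dvd_sub_one_mul_of_pow_dvd_pow_sub_one {p x s j : ℕ} (hp : p.Prime) (hx : 1 < x)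
    (h : LTEBase p x) (hs : s ≠ 0) (hj : p ^ j ∣ x ^ s - 1) : p ^ j ∣ (x - 1) * s := by
  have : Fact p.Prime := ⟨hp⟩
  have hx1 : x - 1 ≠ 0 := by omega
  have hxs : x ^ s - 1 ≠ 0 := by have := Nat.one_lt_pow hs hx; omega
  rw [padicValNat_dvd_iff_le hxs, padicValNat_pow_sub_one hp hx h hs] at hj
  rwa [padicValNat_dvd_iff_le (mul_ne_zero hx1 hs), padicValNat.mul hx1 hs]

theorem exists_pow_modEq_of_modEq_one {y m d : ℕ} (hd : d ≠ 0) (hmd : m ∣ d)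
    (hy : y ≡ 1 [MOD m]) (hyd : y.Coprime d)
    (hord : ∀ k, k ≠ 0 → y ^ k ≡ 1 [MOD d] → d / m ∣ k) {z : ℕ} (hz : z ≡ 1 [MOD m]) :
    ∃ k, y ^ k ≡ z [MOD d] := by
  have hm : 0 < m := Nat.pos_of_dvd_of_pos hmd (Nat.pos_of_ne_zero hd)
  set T := d / m
  have hinj : Set.InjOn (fun k => y ^ k % d) (Finset.range T) := by
    have key : ∀ i j, i < j → j < T → y ^ i % d ≠ y ^ j % d := by
      intro i j hij hjT hmod
      have h1 : y ^ i * y ^ (j - i) ≡ y ^ i * 1 [MOD d] := by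
        rw [← pow_add, Nat.add_sub_cancel' hij.le, mul_one]; exact hmod.symm
      have h2 := Nat.ModEq.cancel_left_of_coprime ((hyd.pow_left i).symm) h1
      have := Nat.le_of_dvd (by omega) (hord _ (by omega) h2)
      omega
    intro i hi j hj hij
    simp only [Finset.coe_range, Set.mem_Iio] at hi hj
    rcases lt_trichotomy i j with h | h | h
    · exact absurd hij (key i j h hj)
    · exact h
    · exact absurd hij.symm (key j i h hi)
  have hsub : (Finset.range T).image (fun k => y ^ k % d) ⊆
      (Finset.range d).filter (· ≡ 1 [MOD m]) := by
    intro u hu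
    obtain ⟨k, -, rfl⟩ := Finset.mem_image.1 hu
    refine Finset.mem_filter.2 ⟨Finset.mem_range.2 (Nat.mod_lt _ (by omega)), ?_⟩
    exact ((Nat.mod_modEq _ d).of_dvd hmd).trans (by simpa using hy.pow k)
  have hcard : ((Finset.range d).filter (· ≡ 1 [MOD m])).card ≤
      ((Finset.range T).image (fun k => y ^ k % d)).card := by
    rw [Finset.card_image_of_injOn hinj, Finset.card_range, ← Nat.count_eq_card_filter_range,
      Nat.count_modEq_card _ hm, Nat.mod_eq_zero_of_dvd hmd]
    simp [T]
  have hzmem : z % d ∈ (Finset.range d).filter (· ≡ 1 [MOD m]) :=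
    Finset.mem_filter.2 ⟨Finset.mem_range.2 (Nat.mod_lt _ (by omega)),
      ((Nat.mod_modEq _ d).of_dvd hmd).trans hz⟩
  rw [← Finset.eq_of_subset_of_card_le hsub hcard] at hzmem
  obtain ⟨k, -, hk⟩ := Finset.mem_image.1 hzmem
  exact ⟨k, hk⟩

theorem div_gcd_sub_one_dvd_of_pow_modEq_one {y d k : ℕ} (hd : d ≠ 0) (hy : 1 < y)
    (hyd : ∀ p ∈ d.primeFactors, LTEBase p y) (hk : k ≠ 0) (h : y ^ k ≡ 1 [MOD d]) :
    d / d.gcd (y - 1) ∣ k := by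
  have hy1 : y - 1 ≠ 0 := by omega
  have hyk : y ^ k - 1 ≠ 0 := by have := Nat.one_lt_pow hk hy; omega
  have hdyk : d.factorization ≤ (y ^ k - 1).factorization :=
    (Nat.factorization_le_iff_dvd hd hyk).2
      ((Nat.modEq_iff_dvd' (Nat.one_le_pow _ _ (by omega))).1 h.symm)
  have hgd : d.gcd (y - 1) ∣ d := Nat.gcd_dvd_left d (y - 1)
  refine (Nat.factorization_le_iff_dvd
    (Nat.div_ne_zero_iff_of_dvd hgd |>.2 ⟨hd, (Nat.gcd_pos_of_pos_left _ (by omega)).ne'⟩) hk).1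
    fun p => ?_
  rw [Nat.factorization_div hgd, Nat.factorization_gcd hd hy1]
  simp only [Finsupp.coe_tsub, Finsupp.inf_apply, Pi.sub_apply]
  by_cases hp : p ∈ d.primeFactors
  · have hpp := Nat.prime_of_mem_primeFactors hp
    have hlte := padicValNat_pow_sub_one hpp hy (hyd p hp) hk
    have := hdyk p
    simp only [Nat.factorization_def _ hpp] at this ⊢
    omega
  · rw [← Nat.support_factorization, Finsupp.notMem_support_iff] at hp
    simp [hp]

theorem exists_pow_modEq_of_modEq_one_mod_gcd {y d : ℕ} (hd : d ≠ 0) (hy : 1 < y)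
    (hyd : ∀ p ∈ d.primeFactors, LTEBase p y) {z : ℕ} (hz : z ≡ 1 [MOD d.gcd (y - 1)]) :
    ∃ k, y ^ k ≡ z [MOD d] := by
  refine exists_pow_modEq_of_modEq_one hd (Nat.gcd_dvd_left d (y - 1))
    ((Nat.modEq_iff_dvd' hy.le).2 (Nat.gcd_dvd_right d (y - 1))).symm ?_
    (fun k hk => div_gcd_sub_one_dvd_of_pow_modEq_one hd hy hyd hk) hz
  refine Nat.coprime_of_dvd fun p hp hpy hpd => ?_
  exact (hyd p (Nat.mem_primeFactors.2 ⟨hp, hpd, hd⟩)).not_dvd hp hy hpy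

lemma lteBase_pow_two_mul_sub_one {p b : ℕ} (hp : p.Prime) (hb : b.Coprime p) :
    LTEBase p (b ^ (2 * (p - 1))) := by
  refine ⟨?_, ?_⟩
  · exact (Nat.ModEq.pow_card_sub_one_eq_one hp hb).symm.dvd'.trans
      (Nat.pow_sub_one_dvd_pow_sub_one b (dvd_mul_left _ _))
  · rintro rfl
    exact (dvd_trans (by norm_num) (Nat.eight_dvd_sq_sub_one_of_odd (Nat.coprime_two_right.1 hb)) :
      4 ∣ b ^ 2 - 1)

theorem exists_dvd_dvd_forall_modEq_one_exists_pow_modEq {b d : ℕ} (hb : 1 < b) (hd : d ≠ 0)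
    (hbd : b.Coprime d) :
    ∃ m, m ∣ d ∧
      m ∣ 2 * (∏ p ∈ d.primeFactors, (p - 1)) * ∏ p ∈ d.primeFactors, (b ^ (2 * (p - 1)) - 1) ∧
      ∀ z, z ≡ 1 [MOD m] → ∃ k, b ^ k ≡ z [MOD d] := by
  classical
  set S := d.primeFactors
  set F := 2 * ∏ p ∈ S, (p - 1)
  have hS : ∀ p ∈ S, 2 ≤ p := fun p hp => (Nat.prime_of_mem_primeFactors hp).two_le
  have hx : ∀ p ∈ S, 1 < b ^ (2 * (p - 1)) := fun p hp =>
    Nat.one_lt_pow (by have := hS p hp; omega) hb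
  have hlte : ∀ p ∈ S, LTEBase p (b ^ (2 * (p - 1))) := fun p hp =>
    lteBase_pow_two_mul_sub_one (Nat.prime_of_mem_primeFactors hp)
      (hbd.coprime_dvd_right (Nat.dvd_of_mem_primeFactors hp))
  have hs : ∀ p ∈ S, ∏ q ∈ S.erase p, (q - 1) ≠ 0 := fun p _ =>
    Finset.prod_ne_zero_iff.2 fun q hq => by have := hS q (Finset.mem_of_mem_erase hq); omega
  -- Writing `b ^ F` as a power of `b ^ (2 * (p - 1))` lets LTE at `p` start from a known base.
  have hF : ∀ p ∈ S, F = 2 * (p - 1) * ∏ q ∈ S.erase p, (q - 1) := fun p hp => by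
    rw [mul_assoc, Finset.mul_prod_erase S (fun q => q - 1) hp]
  have hy : 1 < b ^ F := Nat.one_lt_pow (by
    have := Finset.prod_ne_zero_iff.2 fun q hq => (by have := hS q hq; omega : q - 1 ≠ 0)
    omega) hb
  refine ⟨d.gcd (b ^ F - 1), Nat.gcd_dvd_left _ _, ?_, fun z hz => ?_⟩
  · refine (Nat.dvd_iff_prime_pow_dvd_dvd _ _).2 fun p j hp hpj => ?_
    rcases Nat.eq_zero_or_pos j with rfl | hj
    · simp
    have hpS : p ∈ S := Nat.mem_primeFactors.2
      ⟨hp, (dvd_pow_self p hj.ne').trans (hpj.trans (Nat.gcd_dvd_left _ _)), hd⟩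
    have hpj' : p ^ j ∣ (b ^ (2 * (p - 1))) ^ ∏ q ∈ S.erase p, (q - 1) - 1 := by
      rw [← pow_mul, ← hF p hpS]; exact hpj.trans (Nat.gcd_dvd_right _ _)
    refine (pow_dvd_sub_one_mul_of_pow_dvd_pow_sub_one hp (hx p hpS) (hlte p hpS) (hs p hpS)
      hpj').trans ?_
    rw [mul_comm]
    exact Nat.mul_dvd_mul ⟨2 * (p - 1), by rw [hF p hpS]; ring⟩ (Finset.dvd_prod_of_mem _ hpS)
  · obtain ⟨k, hk⟩ := exists_pow_modEq_of_modEq_one_mod_gcd hd hy (fun p hp => by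
      rw [hF p hp, pow_mul]; exact (hlte p hp).pow _) hz
    exact ⟨F * k, by rwa [pow_mul]⟩

lemma Tb_natCast_div (b r d : ℕ) : Tb b (r / d) = ((b * r % d : ℕ) : ℝ) / d := by
  rw [Tb, ← mul_div_assoc, ← Nat.cast_mul, Int.fract_div_natCast_eq_div_natCast_mod]

lemma natCast_mul_pow_mod_div_mem {b a d : ℕ} {A : Set ℝ}
    (hT : ∀ x ∈ A, (∃ q : ℚ, (q : ℝ) = x) → Tb b x ∈ A) (ha : ((a % d : ℕ) : ℝ) / d ∈ A)
    (k : ℕ) : ((a * b ^ k % d : ℕ) : ℝ) / d ∈ A := by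
  induction k with
  | zero => simpa using ha
  | succ k ih =>
    have := hT _ ih ⟨(a * b ^ k % d : ℕ) / d, by push_cast; rfl⟩
    rwa [Tb_natCast_div, Nat.mul_mod_mod, mul_left_comm, ← pow_succ'] at this

lemma natCast_div_mem_of_modEq {b a d m r : ℕ} {A : Set ℝ}
    (hT : ∀ x ∈ A, (∃ q : ℚ, (q : ℝ) = x) → Tb b x ∈ A) (ha : (a : ℝ) / d ∈ A) (had : a < d)
    (hcop : a.Coprime d) (hmd : m ∣ d) (hgen : ∀ z, z ≡ 1 [MOD m] → ∃ k, b ^ k ≡ z [MOD d])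
    (hr : r < d) (hrm : r ≡ a [MOD m]) : (r : ℝ) / d ∈ A := by
  obtain ⟨z, -, hz⟩ := Nat.exists_mul_mod_eq_of_coprime r hcop (by omega)
  have hz1 : z ≡ 1 [MOD m] := by
    refine Nat.ModEq.cancel_left_of_coprime (hcop.coprime_dvd_right hmd).symm ?_
    rw [mul_one]
    exact (Nat.ModEq.of_dvd hmd hz).trans hrm
  obtain ⟨k, hk⟩ := hgen z hz1
  have hak : a * b ^ k % d = r := by
    rw [← Nat.mod_eq_of_lt hr]; exact (hk.mul_left a).trans hz
  have := natCast_mul_pow_mod_div_mem hT (by rwa [Nat.mod_eq_of_lt had]) k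
  rwa [hak] at this

lemma exists_modEq_lt_add_le_add {m d n : ℕ} (a : ℕ) (hm : 0 < m) (hmd : m ∣ d) (hn : n < d) :
    ∃ r < d, r ≡ a [MOD m] ∧ n < r + m ∧ r ≤ n + m := by
  have hmd' : m ≤ d := Nat.le_of_dvd (by omega) hmd
  have ham : a % m < m := Nat.mod_lt a hm
  by_cases h : n < a % m
  · exact ⟨a % m, by omega, Nat.mod_modEq a m, by omega, by omega⟩
  · set t := n - a % m
    refine ⟨a % m + m * (t / m), ?_, ?_, ?_, ?_⟩
    · have := Nat.mul_div_le t m; omega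
    · rw [Nat.ModEq, Nat.add_mul_mod_self_left, Nat.mod_mod]
    · have := Nat.mod_add_div t m; have := Nat.mod_lt t hm; omega
    · have := Nat.mul_div_le t m; omega

lemma exists_modEq_dist_le {m d : ℕ} (a : ℕ) (hm : 0 < m) (hmd : m ∣ d) (hd : d ≠ 0) {x : ℝ}
    (hx : x ∈ Set.Ico 0 1) : ∃ r < d, r ≡ a [MOD m] ∧ dist x (r / d) ≤ m / d := by
  have hd' : (0 : ℝ) < d := by positivity
  have hxd : 0 ≤ x * d := mul_nonneg hx.1 hd'.le
  obtain ⟨r, hr, hrm, hlo, hhi⟩ := exists_modEq_lt_add_le_add a hm hmd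
    ((Nat.floor_lt hxd).2 (by nlinarith [hx.2]))
  refine ⟨r, hr, hrm, ?_⟩
  have hlo' : (⌊x * d⌋₊ : ℝ) + 1 ≤ r + m := by exact_mod_cast hlo
  have hhi' : (r : ℝ) ≤ ⌊x * d⌋₊ + m := by exact_mod_cast hhi
  have := Nat.floor_le hxd
  have := Nat.lt_floor_add_one (x * d)
  rw [Real.dist_eq, show x - r / d = (x * d - r) / d by field_simp, abs_div, abs_of_pos hd']
  gcongr
  rw [abs_le]
  constructor <;> linarith

lemma infDist_le_natCast_div {b a d m : ℕ} {A : Set ℝ}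
    (hT : ∀ x ∈ A, (∃ q : ℚ, (q : ℝ) = x) → Tb b x ∈ A) (ha : (a : ℝ) / d ∈ A) (had : a < d)
    (hcop : a.Coprime d) (hm : 0 < m) (hmd : m ∣ d)
    (hgen : ∀ z, z ≡ 1 [MOD m] → ∃ k, b ^ k ≡ z [MOD d]) {x : ℝ} (hx : x ∈ Set.Ico 0 1) :
    Metric.infDist x A ≤ m / d := by
  obtain ⟨r, hr, hrm, hdist⟩ := exists_modEq_dist_le a hm hmd (by omega) hx
  exact (Metric.infDist_le_dist_of_mem
    (natCast_div_mem_of_modEq hT ha had hcop hmd hgen hr hrm)).trans hdist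

lemma log_two_mul_sSup_infDist_mul_le {S A : Set ℝ} {d m : ℕ} (hd : d ≠ 0) (hm : 0 < m)
    (h : ∀ x ∈ S, Metric.infDist x A ≤ m / d) :
    Real.log (2 * sSup ((fun x => Metric.infDist x A) '' S) * d) ≤ Real.log (2 * m) := by
  set ε := sSup ((fun x => Metric.infDist x A) '' S)
  have hε0 : 0 ≤ ε := Real.sSup_nonneg (by rintro _ ⟨x, -, rfl⟩; exact Metric.infDist_nonneg)
  have hεm : ε ≤ m / d := Real.sSup_le (by rintro _ ⟨x, hx, rfl⟩; exact h x hx) (by positivity)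
  rw [le_div_iff₀ (by positivity)] at hεm
  rcases (by positivity : 0 ≤ 2 * ε * d).eq_or_lt with h0 | hpos
  · rw [← h0, Real.log_zero]
    exact Real.log_nonneg (by norm_cast; omega)
  · exact Real.log_le_log hpos (by linarith)

lemma le_Pd_of_mem_primeFactors {d p : ℕ} (hp : p ∈ d.primeFactors) : p ≤ Pd d :=
  Finset.le_sup (f := id) hp

lemma two_le_Pd {d : ℕ} (hd : 2 ≤ d) : 2 ≤ Pd d := by
  obtain ⟨p, hp, hpd⟩ := Nat.exists_prime_and_dvd (by omega : d ≠ 1)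
  exact hp.two_le.trans (le_Pd_of_mem_primeFactors (Nat.mem_primeFactors.2 ⟨hp, hpd, by omega⟩))

lemma prod_le_four_pow {S : Finset ℕ} {P : ℕ} (hS : ∀ p ∈ S, p.Prime ∧ p ≤ P) :
    ∏ p ∈ S, p ≤ 4 ^ P := by
  refine le_trans ?_ (primorial_le_four_pow P)
  refine Finset.prod_le_prod_of_subset_of_one_le' (fun p hp => ?_) fun p hp _ => ?_
  · exact Finset.mem_filter.2 ⟨Finset.mem_range.2 (Nat.lt_succ_of_le (hS p hp).2), (hS p hp).1⟩
  · exact (Finset.mem_filter.1 hp).2.one_le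

lemma mul_log_le_mul_log_add {p P : ℝ} (hp : 1 ≤ p) (hpP : p ≤ P) :
    p * Real.log P ≤ P * Real.log p + P := by
  have hp0 : 0 < p := by linarith
  have hlog : Real.log (P / p) ≤ P / p - 1 := Real.log_le_sub_one_of_pos (by bound)
  rw [Real.log_div (by linarith) hp0.ne'] at hlog
  have h1 : p * (Real.log P - Real.log p) ≤ P - p := by
    calc p * (Real.log P - Real.log p) ≤ p * (P / p - 1) := by gcongr
      _ = P - p := by field_simp
  nlinarith [Real.log_nonneg hp]

lemma sum_mul_log_le {S : Finset ℕ} {P : ℕ} (hS : ∀ p ∈ S, p.Prime ∧ p ≤ P) :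
    (∑ p ∈ S, (p : ℝ)) * Real.log P ≤ (1 + Real.log 4) * P ^ 2 := by
  have hlog : ∑ p ∈ S, Real.log p ≤ P * Real.log 4 := by
    rw [← Real.log_prod fun p hp => by exact_mod_cast (hS p hp).1.ne_zero, ← Real.log_pow,
      ← Nat.cast_prod]
    exact Real.log_le_log (Nat.cast_pos.2 (Finset.prod_pos fun p hp => (hS p hp).1.pos))
      (by exact_mod_cast prod_le_four_pow hS)
  have hcard : (S.card : ℝ) ≤ P := by
    have := Finset.card_le_card (s := S) (t := Finset.Icc 1 P) fun p hp =>
      Finset.mem_Icc.2 ⟨(hS p hp).1.one_le, (hS p hp).2⟩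
    simp only [Nat.card_Icc, add_tsub_cancel_right] at this
    exact_mod_cast this
  calc (∑ p ∈ S, (p : ℝ)) * Real.log P
      ≤ ∑ p ∈ S, ((P : ℝ) * Real.log p + P) := by
        rw [Finset.sum_mul]
        exact Finset.sum_le_sum fun p hp => mul_log_le_mul_log_add
          (by exact_mod_cast (hS p hp).1.one_le) (by exact_mod_cast (hS p hp).2)
    _ = P * ∑ p ∈ S, Real.log p + S.card * P := by
        rw [Finset.sum_add_distrib, Finset.mul_sum, Finset.sum_const, nsmul_eq_mul]
    _ ≤ P * (P * Real.log 4) + P * P := by gcongr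
    _ = (1 + Real.log 4) * P ^ 2 := by ring

lemma two_mul_le_pow_of_dvd {b m : ℕ} (hb : 2 ≤ b) {S : Finset ℕ} (hS : ∀ p ∈ S, 2 ≤ p)
    (hm : m ∣ 2 * (∏ p ∈ S, (p - 1)) * ∏ p ∈ S, (b ^ (2 * (p - 1)) - 1)) :
    2 * m ≤ b ^ (2 + 3 * ∑ p ∈ S, p) := by
  have h1 : ∏ p ∈ S, (p - 1) ≤ ∏ p ∈ S, b ^ p := Finset.prod_le_prod' fun p _ =>
    (Nat.sub_le p 1).trans (Nat.lt_pow_self hb).le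
  have h2 : ∏ p ∈ S, (b ^ (2 * (p - 1)) - 1) ≤ ∏ p ∈ S, b ^ (2 * p) :=
    Finset.prod_le_prod' fun p _ =>
      (Nat.sub_le _ 1).trans (Nat.pow_le_pow_right (by omega) (by omega))
  have hpos : 0 < 2 * (∏ p ∈ S, (p - 1)) * ∏ p ∈ S, (b ^ (2 * (p - 1)) - 1) := by
    refine Nat.mul_pos (Nat.mul_pos two_pos (Finset.prod_pos fun p hp => ?_))
      (Finset.prod_pos fun p hp => ?_)
    · have := hS p hp; omega
    · have := Nat.one_lt_pow (by have := hS p hp; omega : 2 * (p - 1) ≠ 0) hb; omega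
  calc 2 * m ≤ 2 * (2 * (∏ p ∈ S, (p - 1)) * ∏ p ∈ S, (b ^ (2 * (p - 1)) - 1)) :=
        Nat.mul_le_mul_left 2 (Nat.le_of_dvd hpos hm)
    _ ≤ b ^ 2 * (∏ p ∈ S, b ^ p) * ∏ p ∈ S, b ^ (2 * p) := by
        rw [← mul_assoc, ← mul_assoc]; gcongr; nlinarith
    _ = b ^ (2 + 3 * ∑ p ∈ S, p) := by
        rw [Finset.prod_pow_eq_pow_sum, Finset.prod_pow_eq_pow_sum, ← Finset.mul_sum, ← pow_add,
          ← pow_add]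
        ring_nf

lemma two_add_three_mul_sum_mul_log_le {S : Finset ℕ} {P : ℕ} (hP : 2 ≤ P)
    (hS : ∀ p ∈ S, p.Prime ∧ p ≤ P) :
    ((2 + 3 * ∑ p ∈ S, p : ℕ) : ℝ) * Real.log P ≤ 9 * P ^ 2 := by
  have hP' : (2 : ℝ) ≤ P := by exact_mod_cast hP
  have hlogP : Real.log P ≤ P := (Real.log_le_sub_one_of_pos (by positivity)).trans (by linarith)
  have hlog4 : Real.log 4 < 1.39 := by
    rw [show (4 : ℝ) = 2 ^ 2 by norm_num, Real.log_pow]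
    linarith [Real.log_two_lt_d9]
  have := sum_mul_log_le hS
  push_cast
  nlinarith

theorem stmt16 : ∃ c : ℝ, c > 0 ∧
    ∀ (b : ℕ), 2 ≤ b → ∀ (A : Set ℝ), A ⊆ Set.Ico 0 1 →
    (∀ x ∈ A, (∃ q : ℚ, (q : ℝ) = x) → Tb b x ∈ A) →
    ¬ Set.Icc (0 : ℝ) 1 ⊆ closure A →
    ∀ ε : ℝ, ε = sSup ((fun x => Metric.infDist x A) '' Set.Ico 0 1) →
    ∀ a d : ℕ, 2 ≤ d → Nat.Coprime (a * b) d → (a : ℝ) / d ∈ A →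
    Real.log (2 * ε * d) ≤ c * ((Pd d : ℝ) ^ 2 / Real.log (Pd d)) * Real.log b := by
  refine ⟨9, by norm_num, fun b hb A hA hT _ ε hε a d hd hcop ha => ?_⟩
  have hd0 : d ≠ 0 := by omega
  have had : a < d := by exact_mod_cast (div_lt_one (by positivity)).1 (hA ha).2
  obtain ⟨m, hmd, hmN, hgen⟩ :=
    exists_dvd_dvd_forall_modEq_one_exists_pow_modEq hb hd0 hcop.coprime_mul_left
  have hm : 0 < m := Nat.pos_of_dvd_of_pos hmd (by omega)
  have hS : ∀ p ∈ d.primeFactors, p.Prime ∧ p ≤ Pd d := fun p hp =>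
    ⟨Nat.prime_of_mem_primeFactors hp, le_Pd_of_mem_primeFactors hp⟩
  have hP : (1 : ℝ) < Pd d := by exact_mod_cast two_le_Pd hd
  set E := 2 + 3 * ∑ p ∈ d.primeFactors, p
  calc Real.log (2 * ε * d) ≤ Real.log (2 * m) := hε ▸ log_two_mul_sSup_infDist_mul_le hd0 hm
          fun x hx => infDist_le_natCast_div hT ha had hcop.coprime_mul_right hm hmd hgen hx
    _ ≤ Real.log (b ^ E) := Real.log_le_log (by positivity) <| by
          exact_mod_cast two_mul_le_pow_of_dvd hb (fun p hp => (hS p hp).1.two_le) hmN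
    _ = E * Real.log b := Real.log_pow _ _
    _ ≤ 9 * ((Pd d : ℝ) ^ 2 / Real.log (Pd d)) * Real.log b := by
        rw [mul_div_assoc']
        gcongr
        exact (le_div_iff₀ (Real.log_pos hP)).2
          (two_add_three_mul_sum_mul_log_le (two_le_Pd hd) hS)
end
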